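/- arXiv:1910.03759 — 13 statements merged into one kernel-verified Lean document; each statement's English description precedes it below -/
import Mathlib

section
/- Let 0 ≤ t̄₁ ≤ t̄₂ be natural numbers. For a threshold t̄ define the probability distribution π_j(t̄) = λ/(λ·t̄+1) for 0 ≤ j ≤ t̄ and π_j(t̄) = (1−λ)^{j−t̄}·λ/(λ·t̄+1) for j ≥ t̄+1, and set J(t̄) = Σ_{j=0}^∞ π_j(t̄)·c_j. If the series Σ_{j=0}^∞ (1−λ)^j·c_j converges, then J(t̄₁) ≤ J(t̄₂); that is, J is monotonically nondecreasing in the threshold t̄. -/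
open Matrix Filter

/-- Proposition 1: monotonicity of `J` in the threshold. -/
theorem J_monotone_in_threshold
    (lam : ℝ) (hlam0 : 0 < lam) (hlam1 : lam < 1)
    (n : ℕ) (hn : 0 < n)
    (A Q Pbar : Matrix (Fin n) (Fin n) ℝ)
    (hQ : Q.PosSemidef) (hP : Pbar.PosSemidef)
    (hloewner : (A * Pbar * Aᵀ + Q - Pbar).PosSemidef)
    (c : ℕ → ℝ) (hc : ∀ j, c j = ((fun X => A * X * Aᵀ + Q)^[j] Pbar).trace)
    (π : ℕ → ℕ → ℝ)
    (hπ1 : ∀ tbar j : ℕ, j ≤ tbar → π tbar j = lam / (lam * (tbar : ℝ) + 1))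
    (hπ2 : ∀ tbar j : ℕ, tbar + 1 ≤ j →
      π tbar j = (1 - lam) ^ (j - tbar) * lam / (lam * (tbar : ℝ) + 1))
    (hsum : Summable fun j : ℕ => (1 - lam) ^ j * c j)
    (t1 t2 : ℕ) (h12 : t1 ≤ t2) :
    ∑' j : ℕ, π t1 j * c j ≤ ∑' j : ℕ, π t2 j * c j := by
  have h1 : (0:ℝ) < 1 - lam := by linarith
  -- `c` is monotone
  have cmono : Monotone c := by
    set f : Matrix (Fin n) (Fin n) ℝ → Matrix (Fin n) (Fin n) ℝ := fun X => A * X * Aᵀ + Q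
      with hf
    have hstep : ∀ j, (f^[j+1] Pbar - f^[j] Pbar).PosSemidef := by
      intro j
      induction j with
      | zero => simpa [hf] using hloewner
      | succ j ih =>
        have h2 := ih.mul_mul_conjTranspose_same A
        rw [Function.iterate_succ_apply' f (j+1)]
        nth_rewrite 2 [Function.iterate_succ_apply' f j]
        have heq : f (f^[j+1] Pbar) - f (f^[j] Pbar)
            = A * (f^[j+1] Pbar - f^[j] Pbar) * Aᴴ := by
          simp only [hf, Matrix.conjTranspose_eq_transpose_of_trivial, Matrix.mul_sub,
            Matrix.sub_mul]
          abel
        rw [heq]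
        exact h2
    apply monotone_nat_of_le_succ
    intro j
    rw [hc j, hc (j+1)]
    have htr : 0 ≤ (f^[j+1] Pbar - f^[j] Pbar).trace := by
      rw [Matrix.trace]
      apply Finset.sum_nonneg
      intro i _
      exact (hstep j).diag_nonneg
    rw [Matrix.trace_sub] at htr
    linarith
  -- shifted summability
  have hshift : ∀ t : ℕ, Summable fun k : ℕ => (1 - lam) ^ k * c (t + 1 + k) := by
    intro t
    have h0 : Summable fun k : ℕ => (1 - lam) ^ (k + (t+1)) * c (k + (t+1)) :=
      (summable_nat_add_iff (f := fun j : ℕ => (1 - lam) ^ j * c j) (t+1)).2 hsum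
    have h2 := h0.mul_left (((1 - lam) ^ (t+1))⁻¹)
    refine h2.congr fun k => ?_
    have hpow : (1 - lam) ^ (k + (t+1)) = (1 - lam) ^ (t+1) * (1 - lam) ^ k := by
      rw [pow_add]; ring
    rw [hpow, show k + (t+1) = t + 1 + k by omega]
    field_simp
  set U : ℕ → ℝ := fun t => ∑' k : ℕ, (1 - lam) ^ k * c (t + 1 + k) with hUdef
  -- lower bound on U
  have hU_ge : ∀ t : ℕ, c t / lam ≤ U t := by
    intro t
    have hgeo : Summable fun k : ℕ => (1 - lam) ^ k :=
      summable_geometric_of_lt_one h1.le (by linarith)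
    have hle : ∑' k : ℕ, (1 - lam) ^ k * c t ≤ U t := by
      refine Summable.tsum_le_tsum (fun k => ?_) (hgeo.mul_right (c t)) (hshift t)
      exact mul_le_mul_of_nonneg_left (cmono (by omega)) (pow_nonneg h1.le k)
    have : ∑' k : ℕ, (1 - lam) ^ k * c t = c t / lam := by
      rw [tsum_mul_right, tsum_geometric_of_lt_one h1.le (by linarith)]
      field_simp
      rw [sub_sub_cancel, mul_div_cancel_left₀ (c t) hlam0.ne']
    linarith [hle, this.ge]
  -- recursion for U
  have hU_rec : ∀ t : ℕ, U t = c (t+1) + (1 - lam) * U (t+1) := by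
    intro t
    have h0 := Summable.tsum_eq_zero_add (hshift t)
    simp only [pow_zero, one_mul, add_zero] at h0
    rw [hUdef]
    simp only
    rw [h0]
    congr 1
    have : ∀ k : ℕ, (1 - lam) ^ (k+1) * c (t + 1 + (k+1))
        = (1 - lam) * ((1 - lam) ^ k * c (t + 1 + 1 + k)) := by
      intro k
      rw [pow_succ, show t + 1 + (k+1) = t + 1 + 1 + k by omega]
      ring
    rw [tsum_congr this, tsum_mul_left]
  -- summability of the full series
  have hgsum : ∀ t : ℕ, Summable fun j : ℕ => π t j * c j := by
    intro t
    apply (summable_nat_add_iff (f := fun j : ℕ => π t j * c j) (t+1)).1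
    have h2 := ((hshift t).mul_left ((1 - lam) * (lam / (lam * (t:ℝ) + 1))))
    refine h2.congr fun k => ?_
    rw [hπ2 t (k + (t+1)) (by omega), show k + (t+1) - t = k + 1 by omega,
      show k + (t+1) = t + 1 + k by omega, pow_succ]
    ring
  -- closed form for J
  have hJ : ∀ t : ℕ, ∑' j : ℕ, π t j * c j
      = lam / (lam * (t:ℝ) + 1) * ((∑ j ∈ Finset.range (t+1), c j) + (1 - lam) * U t) := by
    intro t
    rw [← Summable.sum_add_tsum_nat_add (f := fun j : ℕ => π t j * c j) (t+1) (hgsum t)]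
    have hA : ∑ j ∈ Finset.range (t+1), π t j * c j
        = lam / (lam * (t:ℝ) + 1) * ∑ j ∈ Finset.range (t+1), c j := by
      rw [Finset.mul_sum]
      refine Finset.sum_congr rfl fun j hj => ?_
      rw [hπ1 t j (by simpa using Nat.lt_succ_iff.1 (Finset.mem_range.1 hj))]
    have hB : ∑' k : ℕ, π t (k + (t+1)) * c (k + (t+1))
        = lam / (lam * (t:ℝ) + 1) * ((1 - lam) * U t) := by
      have : ∀ k : ℕ, π t (k + (t+1)) * c (k + (t+1))
          = (lam / (lam * (t:ℝ) + 1) * (1 - lam)) * ((1 - lam) ^ k * c (t + 1 + k)) := by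
        intro k
        rw [hπ2 t (k + (t+1)) (by omega), show k + (t+1) - t = k + 1 by omega,
          show k + (t+1) = t + 1 + k by omega, pow_succ]
        ring
      rw [tsum_congr this, tsum_mul_left, hUdef]
      ring
    rw [hA, hB]
    ring
  -- step inequality
  have hkey : ∀ t : ℕ, ∑' j : ℕ, π t j * c j ≤ ∑' j : ℕ, π (t+1) j * c j := by
    intro t
    rw [hJ t, hJ (t+1)]
    set Cs : ℝ := ∑ j ∈ Finset.range (t+1), c j with hCs
    have hsum_succ : ∑ j ∈ Finset.range (t+1+1), c j = Cs + c (t+1) :=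
      Finset.sum_range_succ c (t+1)
    rw [hsum_succ]
    have hrec := hU_rec t
    have hd1 : (0:ℝ) < lam * (t:ℝ) + 1 := by positivity
    have hd2 : (0:ℝ) < lam * ((t:ℝ)+1) + 1 := by positivity
    have hCs_le : Cs ≤ ((t:ℝ)+1) * c t := by
      have := Finset.sum_le_card_nsmul (Finset.range (t+1)) c (c t)
        (fun j hj => cmono (Nat.lt_succ_iff.1 (Finset.mem_range.1 hj)))
      simpa [Finset.card_range, nsmul_eq_mul, add_comm] using this
    have hct_le : c t ≤ lam * U t := by
      have := hU_ge t
      rw [div_le_iff₀ hlam0] at this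
      linarith [this]
    have hmain : Cs ≤ lam * ((t:ℝ)+1) * U t := by
      calc Cs ≤ ((t:ℝ)+1) * c t := hCs_le
        _ ≤ ((t:ℝ)+1) * (lam * U t) := by
            apply mul_le_mul_of_nonneg_left hct_le (by positivity)
        _ = lam * ((t:ℝ)+1) * U t := by ring
    have hUt1 : (1 - lam) * U (t+1) = U t - c (t+1) := by linarith [hrec]
    push_cast
    rw [hUt1]
    rw [div_mul_eq_mul_div, div_mul_eq_mul_div, div_le_div_iff₀ hd1 (by push_cast at hd2 ⊢; linarith)]
    nlinarith [mul_nonneg (mul_nonneg hlam0.le hlam0.le) (sub_nonneg.2 hmain)]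
  -- conclude by induction
  exact monotone_nat_of_le_succ hkey h12
end

section
/- (Lemma 2.) Under the stationarity hypotheses on φ, the first-row probabilities satisfy the delayed linear recurrence: φ(0,0) = λ·λ_e/(λ·t̄+1); φ(0,j+1) = α·φ(0,j) for all 0 ≤ j ≤ t̄−1; and φ(0,j+1) = α·φ(0,j) + β·φ(0,j−t̄) for all j ≥ t̄. -/
open Filter

/-- Lemma 2: under the stationarity hypotheses, the first-row
probabilities satisfy a delayed linear recurrence. Here `j ∈ Ω_i` is encoded as
`j + tbar + 1 ≤ i ∨ i ≤ j`, and `i ∈ Γ_j` as `i ≤ j ∨ tbar + j + 1 ≤ i`. -/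
theorem first_row_recurrence
    (lam lam_e : ℝ) (hlam0 : 0 < lam) (hlam1 : lam < 1)
    (hle0 : 0 < lam_e) (hle1 : lam_e < 1)
    (tbar : ℕ)
    (φ : ℕ → ℕ → ℝ)
    (hnonneg : ∀ i j, 0 ≤ φ i j)
    (hzero : ∀ i j, ¬(j + tbar + 1 ≤ i ∨ i ≤ j) → φ i j = 0)
    (hsummable : Summable fun p : ℕ × ℕ => φ p.1 p.2)
    (htotal : ∑' p : ℕ × ℕ, φ p.1 p.2 = 1)
    (ha : φ 0 0 = lam * lam_e * ∑' i : ℕ, ∑' j : ℕ, (if tbar ≤ i then φ i j else 0))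
    (hb : ∀ j : ℕ, φ 0 (j + 1) =
      lam * (1 - lam_e) *
        ∑' i : ℕ, (if tbar ≤ i ∧ (i ≤ j ∨ tbar + j + 1 ≤ i) then φ i j else 0))
    (hcrec : ∀ i, i < tbar → ∀ j, φ (i + 1) (j + 1) = φ i j)
    (hd : ∀ i, tbar ≤ i → ∀ j, φ (i + 1) (j + 1) = (1 - lam) * (1 - lam_e) * φ i j)
    (he : ∀ i : ℕ, (∑' j : ℕ, φ i j) =
      if i ≤ tbar then lam / (lam * (tbar : ℝ) + 1)
      else (1 - lam) ^ (i - tbar) * lam / (lam * (tbar : ℝ) + 1)) :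
    φ 0 0 = lam * lam_e / (lam * (tbar : ℝ) + 1) ∧
    (∀ j, j < tbar → φ 0 (j + 1) = (1 - lam) * (1 - lam_e) * φ 0 j) ∧
    (∀ j, tbar ≤ j → φ 0 (j + 1) =
      (1 - lam) * (1 - lam_e) * φ 0 j + lam * (1 - lam_e) * φ 0 (j - tbar)) := by
  have hX : (0:ℝ) < lam * tbar + 1 := by positivity
  have hrow : ∀ i, Summable (fun j => φ i j) := fun i =>
    hsummable.comp_injective (i := fun j => (i, j)) (fun a b h => by simpa using h)
  have hcol : ∀ j, Summable (fun i => φ i j) := fun j =>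
    hsummable.comp_injective (i := fun i => (i, j)) (fun a b h => by simpa using h)
  have hgeo : ∑' k : ℕ, (1 - lam) ^ k = lam⁻¹ := by
    rw [tsum_geometric_of_lt_one (by linarith) (by linarith)]; ring_nf
  have hP : ∀ k : ℕ, (∑' j, φ (tbar + k) j) = (1 - lam) ^ k * (lam / (lam * tbar + 1)) := by
    intro k
    rcases k with _ | k
    · simp only [Nat.add_zero]; rw [he tbar, if_pos le_rfl]; simp
    · rw [he (tbar + (k+1)), if_neg (by omega)]
      rw [Nat.add_sub_cancel_left, mul_div_assoc]
  -- Part 1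
  have hpart1 : φ 0 0 = lam * lam_e / (lam * (tbar : ℝ) + 1) := by
    have hmarg : Summable (fun i => ∑' j, φ i j) := by
      have := (summable_prod_of_nonneg (f := fun p : ℕ × ℕ => φ p.1 p.2)
        (fun p => hnonneg p.1 p.2)).mp hsummable
      exact this.2
    have hAsum : Summable (fun i => if tbar ≤ i then (∑' j, φ i j) else 0) :=
      Summable.of_nonneg_of_le
        (fun i => by by_cases h : tbar ≤ i <;> simp [h, tsum_nonneg (fun j => hnonneg i j)])
        (fun i => by by_cases h : tbar ≤ i <;> simp [h, tsum_nonneg (fun j => hnonneg i j)])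
        hmarg
    have hAval : ∑' i, (if tbar ≤ i then (∑' j, φ i j) else 0)
        = lam⁻¹ * (lam / (lam * tbar + 1)) := by
      rw [← Summable.sum_add_tsum_nat_add tbar hAsum]
      rw [Finset.sum_eq_zero (fun i hi => by
        rw [if_neg]; simpa using Finset.mem_range.mp hi)]
      rw [zero_add]
      have hAk : ∀ k : ℕ, (if tbar ≤ k + tbar then (∑' j, φ (k + tbar) j) else 0)
          = (1 - lam) ^ k * (lam / (lam * tbar + 1)) := by
        intro k
        rw [if_pos (by omega), Nat.add_comm k tbar, hP k]
      rw [tsum_congr hAk, tsum_mul_right, hgeo]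
    have h0 : φ 0 0 = lam * lam_e * (lam⁻¹ * (lam / (lam * tbar + 1))) := by
      rw [ha]
      congr 1
      rw [← hAval]
      refine tsum_congr (fun i => ?_)
      by_cases h : tbar ≤ i <;> simp [h]
    rw [h0]
    field_simp
  -- values of column 0 beyond row tbar
  have hcolval : ∀ k : ℕ, φ (tbar + 1 + k) 0
      = (1 - lam) ^ k * ((1 - lam) * lam_e * (lam / (lam * tbar + 1))) := by
    intro k
    have h1 : (∑' j, φ (tbar + 1 + k) j)
        = φ (tbar + 1 + k) 0 + ∑' j, φ (tbar + 1 + k) (j + 1) :=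
      Summable.tsum_eq_zero_add (hrow _)
    have h2 : ∀ j : ℕ, φ (tbar + 1 + k) (j + 1) = (1 - lam) * (1 - lam_e) * φ (tbar + k) j := by
      intro j
      have e : tbar + 1 + k = (tbar + k) + 1 := by omega
      rw [e]
      exact hd (tbar + k) (by omega) j
    have h3 : (∑' j, φ (tbar + 1 + k) (j + 1))
        = (1 - lam) * (1 - lam_e) * ((1 - lam) ^ k * (lam / (lam * tbar + 1))) := by
      rw [tsum_congr h2, tsum_mul_left, hP k]
    have h4 : (∑' j, φ (tbar + 1 + k) j) = (1 - lam) ^ (k + 1) * (lam / (lam * tbar + 1)) := by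
      have e : tbar + 1 + k = tbar + (k + 1) := by omega
      rw [e, hP (k + 1)]
    rw [h4, h3] at h1
    have h5 : φ (tbar + 1 + k) 0
        = (1 - lam) ^ (k+1) * (lam / (lam * tbar + 1))
          - (1 - lam) * (1 - lam_e) * ((1 - lam) ^ k * (lam / (lam * tbar + 1))) := by
      linarith
    rw [h5, pow_succ]
    ring
  -- base case
  have hbase : φ 0 1 = (1 - lam) * (1 - lam_e) * φ 0 0
      + (if tbar = 0 then lam * (1 - lam_e) * φ 0 0 else 0) := by
    have hTsum : Summable (fun i => if tbar + 1 ≤ i then φ i 0 else 0) :=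
      Summable.of_nonneg_of_le
        (fun i => by by_cases h : tbar + 1 ≤ i <;> simp [h, hnonneg i 0])
        (fun i => by by_cases h : tbar + 1 ≤ i <;> simp [h, hnonneg i 0])
        (hcol 0)
    have hshift : ∑' k : ℕ, φ (tbar + 1 + k) 0
        = lam⁻¹ * ((1 - lam) * lam_e * (lam / (lam * tbar + 1))) := by
      rw [tsum_congr hcolval, tsum_mul_right, hgeo]
    have hT : ∑' i, (if tbar + 1 ≤ i then φ i 0 else 0)
        = lam⁻¹ * ((1 - lam) * lam_e * (lam / (lam * tbar + 1))) := by
      rw [← Summable.sum_add_tsum_nat_add (tbar + 1) hTsum]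
      rw [Finset.sum_eq_zero (fun i hi => by
        rw [if_neg]; simpa using Finset.mem_range.mp hi)]
      rw [zero_add, ← hshift]
      refine tsum_congr (fun k => ?_)
      rw [if_pos (by omega)]
      congr 1
      omega
    rcases Nat.eq_zero_or_pos tbar with h0 | hpos
    · subst h0
      rw [if_pos rfl]
      have hcond : ∀ i : ℕ, (if 0 ≤ i ∧ (i ≤ 0 ∨ 0 + 0 + 1 ≤ i) then φ i 0 else 0) = φ i 0 := by
        intro i; rw [if_pos ⟨Nat.zero_le i, by omega⟩]
      have hsplit : (∑' i, φ i 0) = φ 0 0 + ∑' k : ℕ, φ (k + 1) 0 :=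
        Summable.tsum_eq_zero_add (hcol 0)
      have htail : (∑' k : ℕ, φ (k + 1) 0)
          = lam⁻¹ * ((1 - lam) * lam_e * (lam / (lam * ((0:ℕ):ℝ) + 1))) := by
        rw [← hshift]
        refine tsum_congr (fun k => ?_)
        congr 1
        omega
      rw [hb 0, tsum_congr hcond, hsplit, htail, hpart1]
      push_cast
      field_simp
      ring
    · rw [if_neg (by omega), add_zero]
      have hcond : ∀ i : ℕ, (if tbar ≤ i ∧ (i ≤ 0 ∨ tbar + 0 + 1 ≤ i) then φ i 0 else 0)
          = (if tbar + 1 ≤ i then φ i 0 else 0) := by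
        intro i
        by_cases h : tbar + 1 ≤ i
        · rw [if_pos ⟨by omega, Or.inr (by omega)⟩, if_pos h]
        · rw [if_neg (by omega), if_neg h]
      rw [hb 0, tsum_congr hcond, hT, hpart1]
      field_simp
  -- the step recurrence
  have hdiag : ∀ d, d ≤ tbar → ∀ m : ℕ, φ d (m + d) = φ 0 m := by
    intro d
    induction d with
    | zero => intro _ m; simp
    | succ d ih =>
      intro hle m
      have hmd : m + (d + 1) = (m + d) + 1 := by omega
      rw [hmd, hcrec d (by omega) (m + d), ih (by omega) m]
  have hstep : ∀ j : ℕ, φ 0 (j + 1 + 1) = (1 - lam) * (1 - lam_e) * φ 0 (j + 1)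
      + (if tbar ≤ j + 1 then lam * (1 - lam_e) * φ 0 (j + 1 - tbar) else 0) := by
    intro j
    set g : ℕ → ℝ := fun i =>
      if tbar ≤ i ∧ (i ≤ j + 1 ∨ tbar + (j + 1) + 1 ≤ i) then φ i (j + 1) else 0 with hgdef
    set s : ℕ → ℝ := fun i =>
      if tbar ≤ i ∧ (i ≤ j ∨ tbar + j + 1 ≤ i) then φ i j else 0 with hsdef
    set e' : ℕ → ℝ := fun i =>
      if i = tbar ∧ tbar ≤ j + 1 then φ 0 (j + 1 - tbar) else 0 with he'def
    have hgsum : Summable g :=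
      Summable.of_nonneg_of_le
        (fun i => by simp only [hgdef]; split <;> simp [hnonneg])
        (fun i => by simp only [hgdef]; split <;> simp [hnonneg])
        (hcol (j + 1))
    have hssum : Summable s :=
      Summable.of_nonneg_of_le
        (fun i => by simp only [hsdef]; split <;> simp [hnonneg])
        (fun i => by simp only [hsdef]; split <;> simp [hnonneg])
        (hcol j)
    have he'sum : Summable e' :=
      summable_of_ne_finset_zero (s := {tbar}) (fun b hb => by
        simp only [he'def]
        rw [if_neg]
        intro hc
        exact hb (by simpa using hc.1))
    have he'shiftsum : Summable (fun i => e' (i + 1)) := (summable_nat_add_iff 1).mpr he'sum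
    -- pointwise identities
    have hgE : ∀ i, g i = if tbar ≤ i ∧ (i ≤ j + 1 ∨ tbar + (j + 1) + 1 ≤ i) then φ i (j + 1) else 0 :=
      fun i => by rw [hgdef]
    have hsE : ∀ i, s i = if tbar ≤ i ∧ (i ≤ j ∨ tbar + j + 1 ≤ i) then φ i j else 0 :=
      fun i => by rw [hsdef]
    have heE : ∀ i, e' i = if i = tbar ∧ tbar ≤ j + 1 then φ 0 (j + 1 - tbar) else 0 :=
      fun i => by rw [he'def]
    have hg0 : g 0 = e' 0 := by
      rw [hgE, heE]
      by_cases h : tbar = 0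
      · subst h
        rw [if_pos ⟨le_rfl, Or.inl (by omega)⟩, if_pos ⟨rfl, by omega⟩]
        simp
      · rw [if_neg (by omega), if_neg (fun hc => h hc.1.symm)]
    have hgs : ∀ i : ℕ, g (i + 1) = (1 - lam) * (1 - lam_e) * s i + e' (i + 1) := by
      intro i
      rw [hgE, hsE, heE]
      by_cases h1 : tbar ≤ i
      · rw [if_neg (show ¬(i + 1 = tbar ∧ tbar ≤ j + 1) by omega), add_zero]
        by_cases h2 : i ≤ j ∨ tbar + j + 1 ≤ i
        · rw [if_pos (show tbar ≤ i + 1 ∧ (i + 1 ≤ j + 1 ∨ tbar + (j + 1) + 1 ≤ i + 1) by omega),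
            if_pos ⟨h1, h2⟩]
          exact hd i h1 j
        · rw [if_neg (show ¬(tbar ≤ i + 1 ∧ (i + 1 ≤ j + 1 ∨ tbar + (j + 1) + 1 ≤ i + 1)) by omega),
            if_neg (fun hc => h2 hc.2), mul_zero]
      · rw [if_neg (fun hc : tbar ≤ i ∧ (i ≤ j ∨ tbar + j + 1 ≤ i) => h1 hc.1), mul_zero, zero_add]
        by_cases h2 : i + 1 = tbar
        · by_cases h3 : tbar ≤ j + 1
          · rw [if_pos (show tbar ≤ i + 1 ∧ (i + 1 ≤ j + 1 ∨ tbar + (j + 1) + 1 ≤ i + 1) by omega),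
              if_pos ⟨h2, h3⟩, h2]
            have hco : j + 1 = (j + 1 - tbar) + tbar := by omega
            conv_lhs => rw [hco]
            exact hdiag tbar le_rfl (j + 1 - tbar)
          · rw [if_neg (show ¬(tbar ≤ i + 1 ∧ (i + 1 ≤ j + 1 ∨ tbar + (j + 1) + 1 ≤ i + 1)) by omega),
              if_neg (fun hc => h3 hc.2)]
        · rw [if_neg (show ¬(tbar ≤ i + 1 ∧ (i + 1 ≤ j + 1 ∨ tbar + (j + 1) + 1 ≤ i + 1)) by omega),
            if_neg (show ¬(i + 1 = tbar ∧ tbar ≤ j + 1) by omega)]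
    have he'val : e' tbar = (if tbar ≤ j + 1 then φ 0 (j + 1 - tbar) else 0) := by
      rw [heE]
      by_cases h : tbar ≤ j + 1
      · rw [if_pos ⟨rfl, h⟩, if_pos h]
      · rw [if_neg (fun hc : tbar = tbar ∧ tbar ≤ j + 1 => h hc.2), if_neg h]
    have key : (∑' i, g i) = (1 - lam) * (1 - lam_e) * (∑' i, s i)
        + (if tbar ≤ j + 1 then φ 0 (j + 1 - tbar) else 0) := by
      calc (∑' i, g i) = g 0 + ∑' i, g (i + 1) := Summable.tsum_eq_zero_add hgsum
        _ = e' 0 + ∑' i, ((1 - lam) * (1 - lam_e) * s i + e' (i + 1)) := by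
            rw [hg0, tsum_congr hgs]
        _ = e' 0 + ((∑' i, (1 - lam) * (1 - lam_e) * s i) + ∑' i, e' (i + 1)) := by
            rw [Summable.tsum_add (hssum.mul_left _) he'shiftsum]
        _ = (1 - lam) * (1 - lam_e) * (∑' i, s i) + (e' 0 + ∑' i, e' (i + 1)) := by
            rw [tsum_mul_left]; ring
        _ = (1 - lam) * (1 - lam_e) * (∑' i, s i) + ∑' i, e' i := by
            rw [← Summable.tsum_eq_zero_add he'sum]
        _ = (1 - lam) * (1 - lam_e) * (∑' i, s i) + e' tbar := by
            congr 1
            exact tsum_eq_single tbar (fun b hb => by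
              rw [heE]; exact if_neg (fun hc => hb hc.1))
        _ = _ := by rw [he'val]
    rw [hb (j + 1), hb j, ← hgdef, ← hsdef, key, mul_add]
    congr 1
    · ring
    · by_cases h : tbar ≤ j + 1 <;> simp [h] <;> ring
  refine ⟨hpart1, ?_, ?_⟩
  · intro j hj
    cases j with
    | zero =>
      have h := hbase
      rw [if_neg (by omega)] at h
      simpa using h
    | succ j =>
      have h := hstep j
      rw [if_neg (by omega)] at h
      simpa using h
  · intro j hj
    cases j with
    | zero =>
      have h := hbase
      rw [if_pos (by omega : tbar = 0)] at h
      simpa [Nat.zero_sub] using h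
    | succ j =>
      have h := hstep j
      rw [if_pos (by omega : tbar ≤ j + 1)] at h
      simpa using h
end

section
/- (Proposition 2, part I.) For every integer j > t̄, the sequence φ satisfies the exponential bound φ(j) ≤ γ^{j−t̄}·φ(0), where γ = (1−λ_e)^{1/(2(t̄+1))}. -/
/-!
With `α + β = 1 - λ_e` and `γ ^ (t̄ + 1) = √(1 - λ_e) ≥ 1 - λ_e`, the candidate bound
`k ↦ γ ^ k` is a supersolution of the delayed recursion: for `k - t̄ ≤ k' ≤ k`,
`α γ^k + β γ^k' ≤ (α + β) γ^k' ≤ γ^(k' + t̄ + 1) ≤ γ^(k + 1)`.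
Strong induction then gives `φ j ≤ γ ^ (j - t̄) * φ 0` for every `j`
(with truncated subtraction, so for `j ≤ t̄` the induction hypothesis reads `φ j ≤ φ 0`).
-/

theorem le_rpow_one_div_two_mul_pow {x : ℝ} (hx0 : 0 ≤ x) (hx1 : x ≤ 1) (n : ℕ) :
    x ≤ (x ^ ((1 : ℝ) / (2 * ((n : ℝ) + 1)))) ^ (n + 1) := by
  have hexp : (1 : ℝ) / (2 * ((n : ℝ) + 1)) * ((n + 1 : ℕ) : ℝ) = 1 / 2 := by
    push_cast
    field_simp
  rw [← Real.rpow_natCast, ← Real.rpow_mul hx0, hexp]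
  calc x = x ^ (1 : ℝ) := (Real.rpow_one x).symm
    _ ≤ x ^ ((1 : ℝ) / 2) := Real.rpow_le_rpow_of_exponent_ge' hx0 hx1 (by norm_num) (by norm_num)

section DelayedRecurrence

variable {α β γ : ℝ} {d : ℕ}

theorem mul_pow_add_mul_pow_le_pow_succ (hα : 0 ≤ α) (hγ0 : 0 ≤ γ) (hγ1 : γ ≤ 1)
    (hαβ : α + β ≤ γ ^ (d + 1)) {k m : ℕ} (hmk : m ≤ k) (hkm : k ≤ m + d) :
    α * γ ^ k + β * γ ^ m ≤ γ ^ (k + 1) := by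
  have hαγ : α * γ ^ k ≤ α * γ ^ m :=
    mul_le_mul_of_nonneg_left (pow_le_pow_of_le_one hγ0 hγ1 hmk) hα
  calc α * γ ^ k + β * γ ^ m ≤ (α + β) * γ ^ m := by linarith
    _ ≤ γ ^ (d + 1) * γ ^ m := by gcongr
    _ = γ ^ (m + d + 1) := by ring
    _ ≤ γ ^ (k + 1) := pow_le_pow_of_le_one hγ0 hγ1 (by omega)

theorem le_pow_sub_mul_of_delayed_recurrence {φ : ℕ → ℝ} (hα : 0 ≤ α) (hβ : 0 ≤ β)
    (hγ0 : 0 ≤ γ) (hγ1 : γ ≤ 1) (hαβ : α + β ≤ γ ^ (d + 1)) (hφ0 : 0 ≤ φ 0)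
    (h_lt : ∀ j, j < d → φ (j + 1) = α * φ j)
    (h_ge : ∀ j, d ≤ j → φ (j + 1) = α * φ j + β * φ (j - d)) (j : ℕ) :
    φ j ≤ γ ^ (j - d) * φ 0 := by
  induction j using Nat.strong_induction_on with
  | _ j ih =>
  rcases j with _ | i
  · simp
  rcases lt_or_ge i d with hid | hdi
  · have hφi : φ i ≤ φ 0 := by
      simpa [Nat.sub_eq_zero_of_le hid.le] using ih i (by omega)
    have hα1 : α ≤ 1 := by linarith [pow_le_one₀ hγ0 hγ1 (n := d + 1)]
    rw [h_lt i hid, Nat.sub_eq_zero_of_le hid, pow_zero, one_mul]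
    nlinarith
  · calc φ (i + 1) = α * φ i + β * φ (i - d) := h_ge i hdi
      _ ≤ α * (γ ^ (i - d) * φ 0) + β * (γ ^ (i - d - d) * φ 0) := by
        gcongr
        · exact ih i (by omega)
        · exact ih (i - d) (by omega)
      _ = (α * γ ^ (i - d) + β * γ ^ (i - d - d)) * φ 0 := by ring
      _ ≤ γ ^ (i - d + 1) * φ 0 := by
        gcongr
        exact mul_pow_add_mul_pow_le_pow_succ hα hγ0 hγ1 hαβ (by omega) (by omega)
      _ = γ ^ (i + 1 - d) * φ 0 := by rw [Nat.sub_add_comm hdi]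

end DelayedRecurrence

/-- Proposition 2, part I: exponential bound on `φ`. -/
theorem phi_exponential_bound
    (lam lam_e : ℝ) (hlam0 : 0 < lam) (hlam1 : lam < 1)
    (hle0 : 0 < lam_e) (hle1 : lam_e < 1)
    (tbar : ℕ)
    (φ : ℕ → ℝ)
    (hφ0 : φ 0 = lam * lam_e / (lam * (tbar : ℝ) + 1))
    (hφ1 : ∀ j, j < tbar → φ (j + 1) = (1 - lam) * (1 - lam_e) * φ j)
    (hφ2 : ∀ j, tbar ≤ j → φ (j + 1) =
      (1 - lam) * (1 - lam_e) * φ j + lam * (1 - lam_e) * φ (j - tbar)) :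
    ∀ j : ℕ, tbar < j →
      φ j ≤ ((1 - lam_e) ^ ((1 : ℝ) / (2 * ((tbar : ℝ) + 1)))) ^ (j - tbar) * φ 0 := by
  intro j _
  have hle : 0 ≤ 1 - lam_e := by linarith
  refine le_pow_sub_mul_of_delayed_recurrence (by nlinarith) (by nlinarith)
    (Real.rpow_nonneg hle _) (Real.rpow_le_one hle (by linarith) (by positivity))
    ?_ ?_ hφ1 hφ2 j
  · calc (1 - lam) * (1 - lam_e) + lam * (1 - lam_e) = 1 - lam_e := by ring
      _ ≤ _ := le_rpow_one_div_two_mul_pow hle (by linarith) tbar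
  · rw [hφ0]
    positivity
end

section
/- (Proposition 2, part II.) The sequence φ converges to 0: lim_{j→∞} φ(j) = 0. -/
/-!
Since `α, β ≥ 0`, the triangle inequality gives `|φ (j+1)| ≤ α |φ j| + β |φ (j - t̄)|`, and both
indices on the right lie in the block of `t̄ + 1` indices preceding `j + 1`. By strong induction
each such block gains a factor `α + β = 1 - λ_e < 1`, so `|φ j| ≤ (1 - λ_e) ^ ⌊j / (t̄+1)⌋ |φ 0|`.
-/

open Filter Topology

def IsDelayRecurrence (a b : ℝ) (t : ℕ) (φ : ℕ → ℝ) : Prop :=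
  (∀ j < t, φ (j + 1) = a * φ j) ∧ ∀ j, t ≤ j → φ (j + 1) = a * φ j + b * φ (j - t)

namespace IsDelayRecurrence

variable {a b : ℝ} {t : ℕ} {φ : ℕ → ℝ}

theorem abs_le_pow_mul_abs_zero (h : IsDelayRecurrence a b t φ) (ha : 0 ≤ a) (hb : 0 ≤ b)
    (hab : a + b ≤ 1) (j : ℕ) : |φ j| ≤ (a + b) ^ (j / (t + 1)) * |φ 0| := by
  induction j using Nat.strong_induction_on with
  | _ j ih =>
    rcases j with _ | m
    · simp
    by_cases hm : m < t
    · have hm0 : |φ m| ≤ |φ 0| := by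
        simpa [Nat.div_eq_of_lt (by omega : m < t + 1)] using ih m (by omega)
      rw [Nat.div_eq_of_lt (by omega : m + 1 < t + 1), pow_zero, one_mul, h.1 m hm, abs_mul,
        abs_of_nonneg ha]
      exact mul_le_of_le_one_left (abs_nonneg _) (by linarith) |>.trans hm0
    · set k := (m - t) / (t + 1)
      have hk : (m + 1) / (t + 1) = k + 1 := by
        rw [show m + 1 = m - t + (t + 1) by omega, Nat.add_div_right _ t.succ_pos]
      have hφm : |φ m| ≤ (a + b) ^ k * |φ 0| :=
        (ih m (by omega)).trans <| mul_le_mul_of_nonneg_right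
          (pow_le_pow_of_le_one (by positivity) hab (Nat.div_le_div_right (by omega)))
          (abs_nonneg _)
      have hφmt : |φ (m - t)| ≤ (a + b) ^ k * |φ 0| := ih (m - t) (by omega)
      calc |φ (m + 1)| = |a * φ m + b * φ (m - t)| := by rw [h.2 m (by omega)]
        _ ≤ a * |φ m| + b * |φ (m - t)| := by
          simpa only [abs_mul, abs_of_nonneg ha, abs_of_nonneg hb] using abs_add_le (a * φ m) (b * φ (m - t))
        _ ≤ a * ((a + b) ^ k * |φ 0|) + b * ((a + b) ^ k * |φ 0|) := by gcongr
        _ = (a + b) ^ ((m + 1) / (t + 1)) * |φ 0| := by rw [hk]; ring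

theorem tendsto_zero (h : IsDelayRecurrence a b t φ) (ha : 0 ≤ a) (hb : 0 ≤ b)
    (hab : a + b < 1) : Tendsto φ atTop (𝓝 0) := by
  have hpow : Tendsto (fun j ↦ (a + b) ^ (j / (t + 1)) * |φ 0|) atTop (𝓝 0) := by
    simpa using ((tendsto_pow_atTop_nhds_zero_of_lt_one (by positivity) hab).comp
      (Nat.tendsto_div_const_atTop t.succ_ne_zero)).mul_const |φ 0|
  exact squeeze_zero_norm (h.abs_le_pow_mul_abs_zero ha hb hab.le) hpow

end IsDelayRecurrence

theorem phi_tendsto_zero_general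
    (lam lam_e : ℝ) (hlam0 : 0 < lam) (hlam1 : lam < 1)
    (hle0 : 0 < lam_e) (hle1 : lam_e < 1)
    (tbar : ℕ)
    (φ : ℕ → ℝ)
    (hφ1 : ∀ j, j < tbar → φ (j + 1) = (1 - lam) * (1 - lam_e) * φ j)
    (hφ2 : ∀ j, tbar ≤ j → φ (j + 1) =
      (1 - lam) * (1 - lam_e) * φ j + lam * (1 - lam_e) * φ (j - tbar)) :
    Tendsto φ atTop (nhds 0) :=
  IsDelayRecurrence.tendsto_zero ⟨hφ1, hφ2⟩ (mul_nonneg (by linarith) (by linarith))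
    (mul_nonneg hlam0.le (by linarith)) (by linarith)

/-- Proposition 2, part II: `φ` converges to `0`. -/
theorem phi_tendsto_zero
    (lam lam_e : ℝ) (hlam0 : 0 < lam) (hlam1 : lam < 1)
    (hle0 : 0 < lam_e) (hle1 : lam_e < 1)
    (tbar : ℕ)
    (φ : ℕ → ℝ)
    (hφ0 : φ 0 = lam * lam_e / (lam * (tbar : ℝ) + 1))
    (hφ1 : ∀ j, j < tbar → φ (j + 1) = (1 - lam) * (1 - lam_e) * φ j)
    (hφ2 : ∀ j, tbar ≤ j → φ (j + 1) =
      (1 - lam) * (1 - lam_e) * φ j + lam * (1 - lam_e) * φ (j - tbar)) :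
    Tendsto φ atTop (nhds 0) :=
  phi_tendsto_zero_general lam lam_e hlam0 hlam1 hle0 hle1 tbar φ hφ1 hφ2
end

section
/- (Proposition 2, part III.) For all natural numbers t̄₁ ≤ t̄₂ and every n ≥ 0, the partial sums of φ are monotonically nonincreasing in the threshold: Σ_{j=0}^{n} φ^{(t̄₁)}(j) ≥ Σ_{j=0}^{n} φ^{(t̄₂)}(j). -/
/-!
Write `S m = ∑_{j<m} φ j`. Summing the recursion `φ (j+1) = α φ j + β φ (j - t̄) [t̄ ≤ j]` gives
`S (m+1) = φ 0 + α S m + β S (m - t̄)`, with truncated subtraction absorbing the case `m < t̄`.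
Since `α, β ≥ 0`, `φ ≥ 0` and `φ 0` decreases in `t̄`, induction on `m` compares the partial sums:
a larger threshold both lowers `φ 0` and delays the feedback term to a shorter, hence smaller,
partial sum.
-/

open Finset

theorem sum_range_ite_le_sub {M : Type*} [AddCommMonoid M] (f : ℕ → M) (t m : ℕ) :
    ∑ j ∈ range m, (if t ≤ j then f (j - t) else 0) = ∑ j ∈ range (m - t), f j := by
  induction m with
  | zero => simp
  | succ m ih =>
    rw [sum_range_succ, ih]
    split_ifs with h
    · rw [show m + 1 - t = m - t + 1 by omega, sum_range_succ]
    · rw [add_zero, show m + 1 - t = m - t by omega]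

def IsDelayedRecurrence (α β : ℝ) (t : ℕ) (f : ℕ → ℝ) : Prop :=
  ∀ j, f (j + 1) = α * f j + if t ≤ j then β * f (j - t) else 0

theorem isDelayedRecurrence_of_cases {α β : ℝ} {t : ℕ} {f : ℕ → ℝ}
    (hlt : ∀ j, j < t → f (j + 1) = α * f j)
    (hle : ∀ j, t ≤ j → f (j + 1) = α * f j + β * f (j - t)) :
    IsDelayedRecurrence α β t f := by
  intro j
  split_ifs with h
  · exact hle j h
  · rw [add_zero, hlt j (not_le.mp h)]

namespace IsDelayedRecurrence

variable {α β : ℝ} {t : ℕ} {f : ℕ → ℝ}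

theorem nonneg (hf : IsDelayedRecurrence α β t f) (hα : 0 ≤ α) (hβ : 0 ≤ β) (h0 : 0 ≤ f 0)
    (j : ℕ) : 0 ≤ f j := by
  induction j using Nat.strong_induction_on with
  | _ j ih =>
    cases j with
    | zero => exact h0
    | succ j =>
      rw [hf j]
      have hdelay : 0 ≤ if t ≤ j then β * f (j - t) else 0 := by
        split_ifs
        · exact mul_nonneg hβ (ih _ (by omega))
        · exact le_rfl
      exact add_nonneg (mul_nonneg hα (ih j j.lt_succ_self)) hdelay

theorem sum_range_succ_eq (hf : IsDelayedRecurrence α β t f) (m : ℕ) :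
    ∑ j ∈ range (m + 1), f j =
      f 0 + α * ∑ j ∈ range m, f j + β * ∑ j ∈ range (m - t), f j := by
  have hdelay : ∑ j ∈ range m, (if t ≤ j then β * f (j - t) else 0) =
      β * ∑ j ∈ range (m - t), f j := by
    rw [mul_sum, ← sum_range_ite_le_sub]
  rw [sum_range_succ', add_comm, sum_congr rfl fun j _ => hf j, sum_add_distrib, ← mul_sum,
    hdelay, add_assoc]

theorem sum_range_le {s : ℕ} {g : ℕ → ℝ} (hf : IsDelayedRecurrence α β s f)
    (hg : IsDelayedRecurrence α β t g) (hα : 0 ≤ α) (hβ : 0 ≤ β) (hf0 : 0 ≤ f 0)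
    (hst : s ≤ t) (hgf : g 0 ≤ f 0) (m : ℕ) :
    ∑ j ∈ range m, g j ≤ ∑ j ∈ range m, f j := by
  induction m using Nat.strong_induction_on with
  | _ m ih =>
    cases m with
    | zero => simp
    | succ m =>
      rw [hf.sum_range_succ_eq, hg.sum_range_succ_eq]
      have hdelay : ∑ j ∈ range (m - t), g j ≤ ∑ j ∈ range (m - s), f j :=
        calc ∑ j ∈ range (m - t), g j ≤ ∑ j ∈ range (m - t), f j := ih _ (by omega)
          _ ≤ ∑ j ∈ range (m - s), f j :=
            sum_le_sum_of_subset_of_nonneg (range_subset_range.mpr (by omega))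
              fun j _ _ => hf.nonneg hα hβ hf0 j
      exact add_le_add (add_le_add hgf (mul_le_mul_of_nonneg_left (ih m m.lt_succ_self) hα))
        (mul_le_mul_of_nonneg_left hdelay hβ)

end IsDelayedRecurrence

/-- Proposition 2, part III: the partial sums of `φ` are
monotonically nonincreasing in the threshold. `φ t` is the sequence `φ^{(t)}`. -/
theorem phi_partial_sums_antitone_in_threshold
    (lam lam_e : ℝ) (hlam0 : 0 < lam) (hlam1 : lam < 1)
    (hle0 : 0 < lam_e) (hle1 : lam_e < 1)
    (φ : ℕ → ℕ → ℝ)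
    (hφ0 : ∀ t : ℕ, φ t 0 = lam * lam_e / (lam * (t : ℝ) + 1))
    (hφ1 : ∀ t : ℕ, ∀ j, j < t → φ t (j + 1) = (1 - lam) * (1 - lam_e) * φ t j)
    (hφ2 : ∀ t : ℕ, ∀ j, t ≤ j → φ t (j + 1) =
      (1 - lam) * (1 - lam_e) * φ t j + lam * (1 - lam_e) * φ t (j - t))
    (t1 t2 : ℕ) (h12 : t1 ≤ t2) (n : ℕ) :
    ∑ j ∈ Finset.range (n + 1), φ t2 j ≤ ∑ j ∈ Finset.range (n + 1), φ t1 j := by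
  have hrec : ∀ t, IsDelayedRecurrence ((1 - lam) * (1 - lam_e)) (lam * (1 - lam_e)) t (φ t) :=
    fun t => isDelayedRecurrence_of_cases (hφ1 t) (hφ2 t)
  have hα : 0 ≤ (1 - lam) * (1 - lam_e) := mul_nonneg (by linarith) (by linarith)
  have hβ : 0 ≤ lam * (1 - lam_e) := mul_nonneg hlam0.le (by linarith)
  have hinit : φ t2 0 ≤ φ t1 0 := by
    rw [hφ0, hφ0]
    gcongr
  exact (hrec t1).sum_range_le (hrec t2) hα hβ (by rw [hφ0]; positivity) h12 hinit (n + 1)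
end

section
/- The sequence φ is summable and its total sum equals λ/(λ·t̄+1): Σ_{j=0}^∞ φ(j) = λ/(λ·t̄+1). -/
/-!
Writing `α = (1-λ)(1-λₑ)` and `β = λ(1-λₑ)`, the recurrence reads `φ (j+1) = α φ j + β ψ j`, where `ψ`
is `φ` delayed by `t̄` steps and padded with zeros. Since `α, β ≥ 0`, `φ` is nonnegative, and as
`α + β = 1 - λₑ < 1` the partial sums are bounded by `φ 0 / λₑ`, so `φ` is summable. Summing the
recurrence, and using that delaying does not change the total, gives `∑ φ = φ 0 + (α + β) ∑ φ`,
that is `∑ φ = φ 0 / λₑ = λ / (λ t̄ + 1)`.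
-/

open Finset

def delay (t : ℕ) (f : ℕ → ℝ) (j : ℕ) : ℝ := if t ≤ j then f (j - t) else 0

section Delay

variable {t : ℕ} {f : ℕ → ℝ}

theorem delay_add (n : ℕ) : delay t f (n + t) = f n := by
  simp [delay]

theorem delay_of_lt {j : ℕ} (h : j < t) : delay t f j = 0 := by
  simp [delay, Nat.not_le.mpr h]

theorem sum_range_delay (n : ℕ) :
    ∑ j ∈ range n, delay t f j = ∑ k ∈ range (n - t), f k := by
  induction n with
  | zero => simp
  | succ n ih =>
    rw [sum_range_succ, ih]
    rcases lt_or_ge n t with h | h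
    · rw [delay_of_lt h, Nat.sub_eq_zero_of_le h.le, Nat.sub_eq_zero_of_le h, add_zero]
    · obtain ⟨k, rfl⟩ := Nat.exists_eq_add_of_le' h
      rw [delay_add, Nat.add_sub_cancel, Nat.add_right_comm, Nat.add_sub_cancel, sum_range_succ]

theorem summable_delay (hf : Summable f) : Summable (delay t f) := by
  rw [← summable_nat_add_iff t]
  simpa only [delay_add] using hf

theorem tsum_delay (hf : Summable f) : ∑' j, delay t f j = ∑' j, f j := by
  rw [← (summable_delay hf).sum_add_tsum_nat_add t, sum_eq_zero fun j hj => delay_of_lt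
    (mem_range.mp hj), zero_add]
  simp only [delay_add]

end Delay

section DelayRecurrence

variable {α β : ℝ} {t : ℕ} {φ : ℕ → ℝ}
  (hrec : ∀ j, φ (j + 1) = α * φ j + β * delay t φ j)
include hrec

theorem nonneg_of_delay_recurrence (hα : 0 ≤ α) (hβ : 0 ≤ β) (hφ0 : 0 ≤ φ 0) (n : ℕ) :
    0 ≤ φ n := by
  induction n using Nat.strong_induction_on with
  | _ n ih =>
    rcases n with _ | n
    · exact hφ0
    · have hdelay : 0 ≤ delay t φ n := by
        unfold delay
        split_ifs
        exacts [ih _ (by omega), le_rfl]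
      rw [hrec]
      exact add_nonneg (mul_nonneg hα (ih n n.lt_succ_self)) (mul_nonneg hβ hdelay)

theorem sum_range_succ_of_delay_recurrence (n : ℕ) :
    ∑ j ∈ range (n + 1), φ j =
      φ 0 + α * ∑ j ∈ range n, φ j + β * ∑ j ∈ range (n - t), φ j := by
  rw [sum_range_succ', add_comm, ← sum_range_delay, mul_sum, mul_sum, add_assoc,
    ← sum_add_distrib]
  exact congrArg _ (sum_congr rfl fun j _ => hrec j)

theorem sum_range_le_of_delay_recurrence (hα : 0 ≤ α) (hβ : 0 ≤ β) (hαβ : α + β < 1)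
    (hφ0 : 0 ≤ φ 0) (n : ℕ) : ∑ j ∈ range n, φ j ≤ φ 0 / (1 - (α + β)) := by
  have hφ := nonneg_of_delay_recurrence hrec hα hβ hφ0
  have hM : φ 0 + (α + β) * (φ 0 / (1 - (α + β))) = φ 0 / (1 - (α + β)) := by
    field_simp [(sub_pos.mpr hαβ).ne']
    ring
  induction n with
  | zero => simpa using div_nonneg hφ0 (sub_pos.mpr hαβ).le
  | succ n ih =>
    have hmono : ∑ j ∈ range (n - t), φ j ≤ ∑ j ∈ range n, φ j :=
      sum_le_sum_of_subset_of_nonneg (range_subset_range.mpr (Nat.sub_le n t))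
        fun j _ _ => hφ j
    rw [sum_range_succ_of_delay_recurrence hrec]
    nlinarith [mul_le_mul_of_nonneg_left ih hα, mul_le_mul_of_nonneg_left (hmono.trans ih) hβ]

theorem summable_of_delay_recurrence (hα : 0 ≤ α) (hβ : 0 ≤ β) (hαβ : α + β < 1)
    (hφ0 : 0 ≤ φ 0) : Summable φ :=
  summable_of_sum_range_le (nonneg_of_delay_recurrence hrec hα hβ hφ0)
    (sum_range_le_of_delay_recurrence hrec hα hβ hαβ hφ0)

theorem tsum_eq_of_delay_recurrence (hφ : Summable φ) :
    ∑' j, φ j = φ 0 + (α + β) * ∑' j, φ j := by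
  have hshift : ∑' j, φ (j + 1) = (α + β) * ∑' j, φ j := by
    rw [tsum_congr hrec, (hφ.mul_left α).tsum_add ((summable_delay hφ).mul_left β),
      tsum_mul_left, tsum_mul_left, tsum_delay hφ, add_mul]
  exact hφ.tsum_eq_zero_add.trans (congrArg _ hshift)

end DelayRecurrence

/-- `φ` is summable with total sum `λ/(λ·t̄+1)`. -/
theorem phi_summable_total
    (lam lam_e : ℝ) (hlam0 : 0 < lam) (hlam1 : lam < 1)
    (hle0 : 0 < lam_e) (hle1 : lam_e < 1)
    (tbar : ℕ)
    (φ : ℕ → ℝ)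
    (hφ0 : φ 0 = lam * lam_e / (lam * (tbar : ℝ) + 1))
    (hφ1 : ∀ j, j < tbar → φ (j + 1) = (1 - lam) * (1 - lam_e) * φ j)
    (hφ2 : ∀ j, tbar ≤ j → φ (j + 1) =
      (1 - lam) * (1 - lam_e) * φ j + lam * (1 - lam_e) * φ (j - tbar)) :
    Summable φ ∧ ∑' j : ℕ, φ j = lam / (lam * (tbar : ℝ) + 1) := by
  have hrec : ∀ j, φ (j + 1) =
      (1 - lam) * (1 - lam_e) * φ j + lam * (1 - lam_e) * delay tbar φ j := by
    intro j
    rcases lt_or_ge j tbar with h | h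
    · rw [hφ1 j h, delay_of_lt h, mul_zero, add_zero]
    · rw [hφ2 j h, delay, if_pos h]
  have hαβ : (1 - lam) * (1 - lam_e) + lam * (1 - lam_e) = 1 - lam_e := by ring
  have hsum : Summable φ :=
    summable_of_delay_recurrence hrec (by nlinarith) (by nlinarith) (by linarith)
      (by rw [hφ0]; positivity)
  refine ⟨hsum, ?_⟩
  have htotal := tsum_eq_of_delay_recurrence hrec hsum
  rw [hαβ] at htotal
  have hS : ∑' j, φ j = φ 0 / lam_e := by
    rw [eq_div_iff hle0.ne']
    linarith
  rw [hS, hφ0]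
  field_simp
end

section
/- For every integer j ≥ t̄+1, the following identity holds: β·Σ_{l=max(0, j−2t̄)}^{j−1−t̄} φ(l) + φ(j−t̄) = φ(0) − λ_e·Σ_{l=0}^{j−1−t̄} φ(l). -/
/-!
The quantity `b * (φ (m - t) + ⋯ + φ (m - 1)) + φ m + c * (φ 0 + ⋯ + φ (m - 1))` is invariant
in `m` for the delay recurrence `φ (m + 1) = a * φ m + b * φ (m - t)` (the delayed term switched
on from `m = t`) as soon as `a + b + c = 1`: passing from `m` to `m + 1` changes it by
`(a + b + c - 1) * φ m`, and at `m = 0` it equals `φ 0`. The theorem is the case `a = α`,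
`b = β`, `c = λ_e`, `m = j - t̄`; the window `Icc (j - 2 t̄) (j - 1 - t̄)` is `Ico (m - t̄) m` only
when `m ≥ 1`, because of truncated subtraction.
-/

open Finset

theorem sum_Ico_window_of_delay_recurrence {R : Type*} [CommRing R] {a b c : R}
    (habc : a + b + c = 1) {t : ℕ} {φ : ℕ → R}
    (h_before : ∀ j, j < t → φ (j + 1) = a * φ j)
    (h_after : ∀ j, t ≤ j → φ (j + 1) = a * φ j + b * φ (j - t)) (m : ℕ) :
    b * ∑ l ∈ Ico (m - t) m, φ l + φ m = φ 0 - c * ∑ l ∈ range m, φ l := by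
  rw [sum_Ico_eq_sub φ (Nat.sub_le m t)]
  induction m with
  | zero => simp
  | succ m ih =>
    rw [sum_range_succ]
    rcases le_or_gt t m with h | h
    · rw [show m + 1 - t = m - t + 1 by omega, sum_range_succ, h_after m h]
      linear_combination ih + φ m * habc
    · rw [show m - t = 0 by omega] at ih
      rw [show m + 1 - t = 0 by omega, h_before m h]
      linear_combination ih + φ m * habc

theorem theta_identity_general
    (lam lam_e : ℝ)
    (tbar : ℕ)
    (φ : ℕ → ℝ)
    (hφ1 : ∀ j, j < tbar → φ (j + 1) = (1 - lam) * (1 - lam_e) * φ j)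
    (hφ2 : ∀ j, tbar ≤ j → φ (j + 1) =
      (1 - lam) * (1 - lam_e) * φ j + lam * (1 - lam_e) * φ (j - tbar)) :
    ∀ j : ℕ, tbar + 1 ≤ j →
      lam * (1 - lam_e) * ∑ l ∈ Finset.Icc (j - 2 * tbar) (j - 1 - tbar), φ l
        + φ (j - tbar)
      = φ 0 - lam_e * ∑ l ∈ Finset.range (j - tbar), φ l := by
  intro j hj
  have hwindow : Icc (j - 2 * tbar) (j - 1 - tbar) = Ico (j - tbar - tbar) (j - tbar) := by
    rw [← Ico_add_one_right_eq_Icc]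
    congr 1 <;> omega
  rw [hwindow]
  exact sum_Ico_window_of_delay_recurrence (by ring) hφ1 hφ2 (j - tbar)

/-- identity for the forcing term of the `ω` recursion. -/
theorem theta_identity
    (lam lam_e : ℝ) (hlam0 : 0 < lam) (hlam1 : lam < 1)
    (hle0 : 0 < lam_e) (hle1 : lam_e < 1)
    (tbar : ℕ)
    (φ : ℕ → ℝ)
    (hφ0 : φ 0 = lam * lam_e / (lam * (tbar : ℝ) + 1))
    (hφ1 : ∀ j, j < tbar → φ (j + 1) = (1 - lam) * (1 - lam_e) * φ j)
    (hφ2 : ∀ j, tbar ≤ j → φ (j + 1) =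
      (1 - lam) * (1 - lam_e) * φ j + lam * (1 - lam_e) * φ (j - tbar)) :
    ∀ j : ℕ, tbar + 1 ≤ j →
      lam * (1 - lam_e) * ∑ l ∈ Finset.Icc (j - 2 * tbar) (j - 1 - tbar), φ l
        + φ (j - tbar)
      = φ 0 - lam_e * ∑ l ∈ Finset.range (j - tbar), φ l :=
  theta_identity_general lam lam_e tbar φ hφ1 hφ2
end

section
/- (Theorem 1, recursion.) Under the stationarity hypotheses on φ, define ω(j) = Σ_{i∈ℕ} φ(i,j) for each j ∈ ℕ. Then ω satisfies the recursion: ω(0) = λ_e/(λ·t̄+1); ω(j) = α·ω(j−1) + φ(0,0) for 1 ≤ j ≤ t̄; and ω(j) = α·ω(j−1) + φ(0,0) − λ_e·Σ_{l=0}^{j−1−t̄} φ(0,l) for j ≥ t̄+1. -/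
/-!
Write `S j = ∑_{i < t̄} φ(i, j)` for the head of column `j`. Shifting column `j + 1` one step
down the diagonal with (c) and (d), and reading (b) as `φ(0, j+1) = β (ω j - S j)`, gives
`ω (j+1) = (1 - λ_e) ω j + λ_e S j`. Together these make `β ω k + λ_e ∑_{l ≤ k} φ(0, l)` a
conserved quantity, equal to `φ(0, 0)` by the initial values of `φ(0, 0)` and `ω 0` (geometric
series over the prescribed row sums). Since (c) carries `φ(0, ·)` down the diagonal,
`S j = ∑_{j + 1 - t̄ ≤ l ≤ j} φ(0, l)`, and the conserved quantity turns the column recursion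
into the claimed one.
-/

open Finset

theorem tsum_eq_tsum_add_of_eq_zero {M : Type*} [AddCommMonoid M] [TopologicalSpace M]
    {f : ℕ → M} {t : ℕ} (hf : ∀ i < t, f i = 0) : ∑' i, f i = ∑' k, f (k + t) := by
  refine ((add_left_injective t).tsum_eq fun i hi => ?_).symm
  exact ⟨i - t, Nat.sub_add_cancel (not_lt.1 fun h => hi (hf i h))⟩

theorem tsum_ite_le_eq_tsum_add {M : Type*} [AddCommMonoid M] [TopologicalSpace M]
    (f : ℕ → M) (t : ℕ) : ∑' i, (if t ≤ i then f i else 0) = ∑' k, f (k + t) := by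
  rw [tsum_eq_tsum_add_of_eq_zero fun i hi => if_neg (not_le.2 hi)]
  simp

theorem Summable.tsum_ite_le_eq_sub {G : Type*} [AddCommGroup G] [TopologicalSpace G]
    [IsTopologicalAddGroup G] [T2Space G] {f : ℕ → G} (hf : Summable f) (t : ℕ) :
    ∑' i, (if t ≤ i then f i else 0) = ∑' i, f i - ∑ i ∈ range t, f i := by
  rw [tsum_ite_le_eq_tsum_add, ← hf.sum_add_tsum_nat_add t, add_sub_cancel_left]

theorem tsum_one_sub_pow_eq_inv {x : ℝ} (h0 : 0 < x) (h2 : x < 2) :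
    ∑' k, (1 - x) ^ k = x⁻¹ := by
  rw [tsum_geometric_of_abs_lt_one (abs_lt.2 ⟨by linarith, by linarith⟩), sub_sub_cancel]

theorem mul_add_mul_sum_range_eq_of_recursion {R : Type*} [CommRing R] {w s p : ℕ → R} {b e : R}
    (hw : ∀ k, w (k + 1) = (1 - e) * w k + e * s k) (hp : ∀ k, p (k + 1) = b * (w k - s k))
    (k : ℕ) : b * w k + e * ∑ l ∈ range (k + 1), p l = b * w 0 + e * p 0 := by
  induction k with
  | zero => simp
  | succ k ih =>
    rw [sum_range_succ, hw, hp]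
    linear_combination ih

/-- The paper's `π_i`, prescribed as the row sums of `φ`. -/
noncomputable def rowMass (lam : ℝ) (t i : ℕ) : ℝ :=
  if i ≤ t then lam / (lam * t + 1) else (1 - lam) ^ (i - t) * lam / (lam * t + 1)

theorem rowMass_add (lam : ℝ) (t k : ℕ) :
    rowMass lam t (k + t) = (1 - lam) ^ k * lam / (lam * t + 1) := by
  unfold rowMass
  rcases k.eq_zero_or_pos with rfl | hk
  · simp
  · rw [if_neg (by omega), Nat.add_sub_cancel]

namespace Stationary

variable {lam lam_e : ℝ} {t : ℕ} {φ : ℕ → ℕ → ℝ}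

theorem eq_apply_zero_sub_of_le (hcrec : ∀ i, i < t → ∀ j, φ (i + 1) (j + 1) = φ i j) :
    ∀ i ≤ t, ∀ j, i ≤ j → φ i j = φ 0 (j - i) := by
  intro i
  induction i with
  | zero => simp
  | succ i ih =>
    intro hi j hij
    obtain ⟨j, rfl⟩ := Nat.exists_eq_add_of_le' (Nat.zero_lt_of_lt hij)
    rw [hcrec i hi j, ih (Nat.le_of_succ_le hi) j (by omega), Nat.add_sub_add_right]

theorem sum_range_eq_sum_Ico (hzero : ∀ i j, ¬(j + t + 1 ≤ i ∨ i ≤ j) → φ i j = 0)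
    (hcrec : ∀ i, i < t → ∀ j, φ (i + 1) (j + 1) = φ i j) (j : ℕ) :
    ∑ i ∈ range t, φ i j = ∑ l ∈ Ico (j + 1 - t) (j + 1), φ 0 l :=
  calc ∑ i ∈ range t, φ i j = ∑ i ∈ range (min t (j + 1)), φ i j :=
        (sum_subset (range_subset_range.2 (min_le_left _ _)) fun i hi hi' =>
          hzero i j (by simp only [mem_range, lt_min_iff, not_and_or, not_lt] at hi hi'; omega)).symm
    _ = ∑ i ∈ range (min t (j + 1)), φ 0 (j - i) :=
        sum_congr rfl fun i hi => by
          rw [mem_range, lt_min_iff] at hi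
          exact eq_apply_zero_sub_of_le hcrec i hi.1.le j (by omega)
    _ = ∑ l ∈ Ico (j + 1 - t) (j + 1), φ 0 l := by
        refine sum_nbij' (j - ·) (j - ·) ?_ ?_ ?_ ?_ fun _ _ => rfl <;>
          · intro i hi
            simp only [mem_range, mem_Ico, lt_min_iff] at hi ⊢
            omega

theorem apply_zero_succ_eq (hzero : ∀ i j, ¬(j + t + 1 ≤ i ∨ i ≤ j) → φ i j = 0)
    (hb : ∀ j : ℕ, φ 0 (j + 1) = lam * (1 - lam_e) *
      ∑' i : ℕ, (if t ≤ i ∧ (i ≤ j ∨ t + j + 1 ≤ i) then φ i j else 0))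
    (hcol : ∀ j, Summable fun i => φ i j) (j : ℕ) :
    φ 0 (j + 1) = lam * (1 - lam_e) * (∑' i, φ i j - ∑ i ∈ range t, φ i j) := by
  have hsupp : ∀ i, (if t ≤ i ∧ (i ≤ j ∨ t + j + 1 ≤ i) then φ i j else 0)
      = if t ≤ i then φ i j else 0 := by
    intro i
    by_cases hij : i ≤ j ∨ t + j + 1 ≤ i
    · simp only [hij, and_true]
    · simp only [hij, and_false, hzero i j (by omega), ite_self]
  rw [hb, tsum_congr hsupp, (hcol j).tsum_ite_le_eq_sub]

theorem tsum_col_succ (hzero : ∀ i j, ¬(j + t + 1 ≤ i ∨ i ≤ j) → φ i j = 0)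
    (hb : ∀ j : ℕ, φ 0 (j + 1) = lam * (1 - lam_e) *
      ∑' i : ℕ, (if t ≤ i ∧ (i ≤ j ∨ t + j + 1 ≤ i) then φ i j else 0))
    (hcrec : ∀ i, i < t → ∀ j, φ (i + 1) (j + 1) = φ i j)
    (hd : ∀ i, t ≤ i → ∀ j, φ (i + 1) (j + 1) = (1 - lam) * (1 - lam_e) * φ i j)
    (hcol : ∀ j, Summable fun i => φ i j) (j : ℕ) :
    ∑' i, φ i (j + 1) = (1 - lam_e) * ∑' i, φ i j + lam_e * ∑ i ∈ range t, φ i j := by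
  have hshift : Summable fun i => φ (i + 1) (j + 1) := (summable_nat_add_iff 1).2 (hcol (j + 1))
  have hhead : ∑ i ∈ range t, φ (i + 1) (j + 1) = ∑ i ∈ range t, φ i j :=
    sum_congr rfl fun i hi => hcrec i (mem_range.1 hi) j
  have htail : ∑' i, (if t ≤ i then φ (i + 1) (j + 1) else 0)
      = (1 - lam) * (1 - lam_e) * ∑' i, (if t ≤ i then φ i j else 0) := by
    rw [← tsum_mul_left]
    refine tsum_congr fun i => ?_
    split_ifs with hi
    exacts [hd i hi j, (mul_zero _).symm]
  rw [hshift.tsum_ite_le_eq_sub, (hcol j).tsum_ite_le_eq_sub, hhead] at htail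
  rw [(hcol (j + 1)).tsum_eq_zero_add, apply_zero_succ_eq hzero hb hcol]
  linear_combination htail

theorem tsum_row_add (he : ∀ i, ∑' j, φ i j = rowMass lam t i) (k : ℕ) :
    ∑' j, φ (k + t) j = (1 - lam) ^ k * lam / (lam * t + 1) := by
  rw [he, rowMass_add]

theorem apply_zero_zero_eq (hlam0 : 0 < lam) (hlam1 : lam < 1)
    (ha : φ 0 0 = lam * lam_e * ∑' i : ℕ, ∑' j : ℕ, (if t ≤ i then φ i j else 0))
    (he : ∀ i, ∑' j, φ i j = rowMass lam t i) :
    φ 0 0 = lam * lam_e / (lam * t + 1) := by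
  have hpull : ∀ i, ∑' j, (if t ≤ i then φ i j else 0) = if t ≤ i then ∑' j, φ i j else 0 :=
    fun i => by split_ifs <;> simp
  rw [ha, tsum_congr hpull, tsum_ite_le_eq_tsum_add, tsum_congr (tsum_row_add he)]
  simp_rw [mul_div_assoc, tsum_mul_right, tsum_one_sub_pow_eq_inv hlam0 (by linarith)]
  field_simp

theorem apply_add_succ_zero_eq
    (hd : ∀ i, t ≤ i → ∀ j, φ (i + 1) (j + 1) = (1 - lam) * (1 - lam_e) * φ i j)
    (he : ∀ i, ∑' j, φ i j = rowMass lam t i)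
    (hrow : ∀ i, Summable (φ i)) (k : ℕ) :
    φ (k + t + 1) 0 = (1 - lam) ^ k * ((1 - lam) * lam_e * lam / (lam * t + 1)) := by
  have hsplit := (hrow (k + t + 1)).tsum_eq_zero_add
  have hshift : ∑' j, φ (k + t + 1) (j + 1) = (1 - lam) * (1 - lam_e) * ∑' j, φ (k + t) j := by
    rw [← tsum_mul_left]
    exact tsum_congr fun j => hd _ (Nat.le_add_left t k) j
  have hnext := tsum_row_add he (k + 1)
  rw [Nat.add_right_comm] at hnext
  rw [hshift, hnext, tsum_row_add he] at hsplit
  linear_combination -hsplit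

theorem tsum_col_zero (hlam0 : 0 < lam) (hlam1 : lam < 1)
    (hzero : ∀ i j, ¬(j + t + 1 ≤ i ∨ i ≤ j) → φ i j = 0)
    (ha : φ 0 0 = lam * lam_e * ∑' i : ℕ, ∑' j : ℕ, (if t ≤ i then φ i j else 0))
    (hd : ∀ i, t ≤ i → ∀ j, φ (i + 1) (j + 1) = (1 - lam) * (1 - lam_e) * φ i j)
    (he : ∀ i, ∑' j, φ i j = rowMass lam t i)
    (hcol : ∀ j, Summable fun i => φ i j) (hrow : ∀ i, Summable (φ i)) :
    ∑' i, φ i 0 = lam_e / (lam * t + 1) := by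
  rw [(hcol 0).tsum_eq_zero_add,
    tsum_eq_tsum_add_of_eq_zero (t := t) fun i hi => hzero (i + 1) 0 (by omega),
    tsum_congr (apply_add_succ_zero_eq hd he hrow), tsum_mul_right,
    tsum_one_sub_pow_eq_inv hlam0 (by linarith), apply_zero_zero_eq hlam0 hlam1 ha he]
  field_simp
  ring

theorem tsum_col_succ_eq (hlam0 : 0 < lam) (hlam1 : lam < 1)
    (hzero : ∀ i j, ¬(j + t + 1 ≤ i ∨ i ≤ j) → φ i j = 0)
    (ha : φ 0 0 = lam * lam_e * ∑' i : ℕ, ∑' j : ℕ, (if t ≤ i then φ i j else 0))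
    (hb : ∀ j : ℕ, φ 0 (j + 1) = lam * (1 - lam_e) *
      ∑' i : ℕ, (if t ≤ i ∧ (i ≤ j ∨ t + j + 1 ≤ i) then φ i j else 0))
    (hcrec : ∀ i, i < t → ∀ j, φ (i + 1) (j + 1) = φ i j)
    (hd : ∀ i, t ≤ i → ∀ j, φ (i + 1) (j + 1) = (1 - lam) * (1 - lam_e) * φ i j)
    (he : ∀ i, ∑' j, φ i j = rowMass lam t i)
    (hcol : ∀ j, Summable fun i => φ i j) (hrow : ∀ i, Summable (φ i)) (k : ℕ) :
    ∑' i, φ i (k + 1) = (1 - lam) * (1 - lam_e) * ∑' i, φ i k + φ 0 0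
      - lam_e * ∑ l ∈ range (k + 1 - t), φ 0 l := by
  have hbase : lam * (1 - lam_e) * ∑' i, φ i 0 + lam_e * φ 0 0 = φ 0 0 := by
    rw [tsum_col_zero hlam0 hlam1 hzero ha hd he hcol hrow, apply_zero_zero_eq hlam0 hlam1 ha he]
    field_simp
    ring
  have hconserved := mul_add_mul_sum_range_eq_of_recursion (w := fun j => ∑' i, φ i j)
    (tsum_col_succ hzero hb hcrec hd hcol) (apply_zero_succ_eq hzero hb hcol) k
  have hhead := sum_range_eq_sum_Ico hzero hcrec k
  rw [sum_Ico_eq_sub _ (Nat.sub_le _ _)] at hhead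
  rw [tsum_col_succ hzero hb hcrec hd hcol, hhead]
  linear_combination hconserved + hbase

end Stationary

open Stationary

theorem omega_recursion_general
    (lam lam_e : ℝ) (hlam0 : 0 < lam) (hlam1 : lam < 1)
    (tbar : ℕ)
    (φ : ℕ → ℕ → ℝ)
    (hzero : ∀ i j, ¬(j + tbar + 1 ≤ i ∨ i ≤ j) → φ i j = 0)
    (hsummable : Summable fun p : ℕ × ℕ => φ p.1 p.2)
    (ha : φ 0 0 = lam * lam_e * ∑' i : ℕ, ∑' j : ℕ, (if tbar ≤ i then φ i j else 0))
    (hb : ∀ j : ℕ, φ 0 (j + 1) =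
      lam * (1 - lam_e) *
        ∑' i : ℕ, (if tbar ≤ i ∧ (i ≤ j ∨ tbar + j + 1 ≤ i) then φ i j else 0))
    (hcrec : ∀ i, i < tbar → ∀ j, φ (i + 1) (j + 1) = φ i j)
    (hd : ∀ i, tbar ≤ i → ∀ j, φ (i + 1) (j + 1) = (1 - lam) * (1 - lam_e) * φ i j)
    (he : ∀ i : ℕ, (∑' j : ℕ, φ i j) =
      if i ≤ tbar then lam / (lam * (tbar : ℝ) + 1)
      else (1 - lam) ^ (i - tbar) * lam / (lam * (tbar : ℝ) + 1))
    (ω : ℕ → ℝ) (hω : ∀ j : ℕ, ω j = ∑' i : ℕ, φ i j) :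
    ω 0 = lam_e / (lam * (tbar : ℝ) + 1) ∧
    (∀ j, 1 ≤ j → j ≤ tbar →
      ω j = (1 - lam) * (1 - lam_e) * ω (j - 1) + φ 0 0) ∧
    (∀ j, tbar + 1 ≤ j →
      ω j = (1 - lam) * (1 - lam_e) * ω (j - 1) + φ 0 0
        - lam_e * ∑ l ∈ Finset.range (j - tbar), φ 0 l) := by
  have hrow : ∀ i, Summable (φ i) := hsummable.prod_factor
  have hcol : ∀ j, Summable fun i => φ i j := hsummable.prod_symm.prod_factor
  have hω_succ (k : ℕ) : ω (k + 1) = (1 - lam) * (1 - lam_e) * ω k + φ 0 0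
      - lam_e * ∑ l ∈ range (k + 1 - tbar), φ 0 l := by
    simp only [hω]
    exact tsum_col_succ_eq hlam0 hlam1 hzero ha hb hcrec hd he hcol hrow k
  refine ⟨(hω 0).trans (tsum_col_zero hlam0 hlam1 hzero ha hd he hcol hrow), ?_, ?_⟩
  · intro j hj hjt
    obtain ⟨k, rfl⟩ : ∃ k, j = k + 1 := ⟨j - 1, by omega⟩
    rw [hω_succ, Nat.add_sub_cancel, Nat.sub_eq_zero_of_le hjt, sum_range_zero, mul_zero, sub_zero]
  · intro j hj
    obtain ⟨k, rfl⟩ : ∃ k, j = k + 1 := ⟨j - 1, by omega⟩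
    rw [hω_succ, Nat.add_sub_cancel]

/-- Theorem 1, recursion: under the stationarity hypotheses,
`ω j = ∑' i, φ i j` satisfies the stated recursion. -/
theorem omega_recursion
    (lam lam_e : ℝ) (hlam0 : 0 < lam) (hlam1 : lam < 1)
    (hle0 : 0 < lam_e) (hle1 : lam_e < 1)
    (tbar : ℕ)
    (φ : ℕ → ℕ → ℝ)
    (hnonneg : ∀ i j, 0 ≤ φ i j)
    (hzero : ∀ i j, ¬(j + tbar + 1 ≤ i ∨ i ≤ j) → φ i j = 0)
    (hsummable : Summable fun p : ℕ × ℕ => φ p.1 p.2)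
    (htotal : ∑' p : ℕ × ℕ, φ p.1 p.2 = 1)
    (ha : φ 0 0 = lam * lam_e * ∑' i : ℕ, ∑' j : ℕ, (if tbar ≤ i then φ i j else 0))
    (hb : ∀ j : ℕ, φ 0 (j + 1) =
      lam * (1 - lam_e) *
        ∑' i : ℕ, (if tbar ≤ i ∧ (i ≤ j ∨ tbar + j + 1 ≤ i) then φ i j else 0))
    (hcrec : ∀ i, i < tbar → ∀ j, φ (i + 1) (j + 1) = φ i j)
    (hd : ∀ i, tbar ≤ i → ∀ j, φ (i + 1) (j + 1) = (1 - lam) * (1 - lam_e) * φ i j)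
    (he : ∀ i : ℕ, (∑' j : ℕ, φ i j) =
      if i ≤ tbar then lam / (lam * (tbar : ℝ) + 1)
      else (1 - lam) ^ (i - tbar) * lam / (lam * (tbar : ℝ) + 1))
    (ω : ℕ → ℝ) (hω : ∀ j : ℕ, ω j = ∑' i : ℕ, φ i j) :
    ω 0 = lam_e / (lam * (tbar : ℝ) + 1) ∧
    (∀ j, 1 ≤ j → j ≤ tbar →
      ω j = (1 - lam) * (1 - lam_e) * ω (j - 1) + φ 0 0) ∧
    (∀ j, tbar + 1 ≤ j →
      ω j = (1 - lam) * (1 - lam_e) * ω (j - 1) + φ 0 0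
        - lam_e * ∑ l ∈ Finset.range (j - tbar), φ 0 l) :=
  omega_recursion_general lam lam_e hlam0 hlam1 tbar φ hzero hsummable ha hb hcrec hd he ω hω
end

section
/- (Theorem 1, part I.) The sequence ω is monotonically nonincreasing: ω(j) ≤ ω(j−1) for every integer j ≥ 1. -/
/-! Both branches of the recursion for `ω` are the single recursion
`ω (j + 1) = α ω j + φ 0 - λ_e ∑_{l < j + 1 - t̄} φ l`, the sum being empty while `j < t̄`.
Subtracting two consecutive instances gives
`ω (j + 2) - ω (j + 1) = α (ω (j + 1) - ω j) - λ_e (partial sums of φ, one step apart)`,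
and the bracket is nonnegative because `φ ≥ 0`, so with `α ≥ 0` each decrement propagates to
the next one. The first decrement holds because `φ 0 = λ ω 0` and `α + λ ≤ 1`. -/

open Finset

lemma nonneg_of_delayed_recurrence {a b : ℝ} {t : ℕ} {φ : ℕ → ℝ}
    (ha : 0 ≤ a) (hb : 0 ≤ b) (h0 : 0 ≤ φ 0)
    (h1 : ∀ j, j < t → φ (j + 1) = a * φ j)
    (h2 : ∀ j, t ≤ j → φ (j + 1) = a * φ j + b * φ (j - t)) :
    ∀ j, 0 ≤ φ j := by
  intro j
  induction j using Nat.strong_induction_on with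
  | _ j ih =>
    match j with
    | 0 => exact h0
    | k + 1 =>
      rcases lt_or_ge k t with hk | hk
      · rw [h1 k hk]
        exact mul_nonneg ha (ih k k.lt_succ_self)
      · rw [h2 k hk]
        exact add_nonneg (mul_nonneg ha (ih k k.lt_succ_self))
          (mul_nonneg hb (ih (k - t) (by omega)))

lemma antitone_of_sub_succ_le_mul {a : ℝ} {u : ℕ → ℝ} (ha : 0 ≤ a) (h0 : u 1 ≤ u 0)
    (h : ∀ j, u (j + 2) - u (j + 1) ≤ a * (u (j + 1) - u j)) : Antitone u := by
  refine antitone_nat_of_succ_le fun j => ?_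
  induction j with
  | zero => exact h0
  | succ j ih => nlinarith [h j, mul_nonpos_of_nonneg_of_nonpos ha (sub_nonpos.2 ih)]

lemma eq_succ_of_threshold_recurrence {a c e : ℝ} {t : ℕ} {φ ω : ℕ → ℝ}
    (h1 : ∀ j, 1 ≤ j → j ≤ t → ω j = a * ω (j - 1) + c)
    (h2 : ∀ j, t + 1 ≤ j → ω j = a * ω (j - 1) + c - e * ∑ l ∈ range (j - t), φ l)
    (j : ℕ) : ω (j + 1) = a * ω j + c - e * ∑ l ∈ range (j + 1 - t), φ l := by
  rcases le_or_gt (j + 1) t with hj | hj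
  · rw [h1 (j + 1) (by omega) hj, Nat.sub_eq_zero_of_le hj]
    simp
  · simpa using h2 (j + 1) hj

/-- Theorem 1, part I: `ω` is monotonically nonincreasing. -/
theorem omega_antitone
    (lam lam_e : ℝ) (hlam0 : 0 < lam) (hlam1 : lam < 1)
    (hle0 : 0 < lam_e) (hle1 : lam_e < 1)
    (tbar : ℕ)
    (φ : ℕ → ℝ)
    (hφ0 : φ 0 = lam * lam_e / (lam * (tbar : ℝ) + 1))
    (hφ1 : ∀ j, j < tbar → φ (j + 1) = (1 - lam) * (1 - lam_e) * φ j)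
    (hφ2 : ∀ j, tbar ≤ j → φ (j + 1) =
      (1 - lam) * (1 - lam_e) * φ j + lam * (1 - lam_e) * φ (j - tbar))
    (ω : ℕ → ℝ)
    (hω0 : ω 0 = lam_e / (lam * (tbar : ℝ) + 1))
    (hω1 : ∀ j, 1 ≤ j → j ≤ tbar →
      ω j = (1 - lam) * (1 - lam_e) * ω (j - 1) + φ 0)
    (hω2 : ∀ j, tbar + 1 ≤ j →
      ω j = (1 - lam) * (1 - lam_e) * ω (j - 1) + φ 0
        - lam_e * ∑ l ∈ Finset.range (j - tbar), φ l) :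
    ∀ j : ℕ, 1 ≤ j → ω j ≤ ω (j - 1) := by
  have hα : 0 ≤ (1 - lam) * (1 - lam_e) := mul_nonneg (by linarith) (by linarith)
  have hφ_nonneg := nonneg_of_delayed_recurrence hα (mul_nonneg hlam0.le (by linarith))
    (by rw [hφ0]; positivity) hφ1 hφ2
  have hS : Monotone fun n => ∑ l ∈ range n, φ l :=
    (sum_mono_set_of_nonneg hφ_nonneg).comp range_mono
  have hrec := eq_succ_of_threshold_recurrence hω1 hω2
  have hφω : φ 0 = lam * ω 0 := by rw [hφ0, hω0]; ring
  have hω0_nonneg : 0 ≤ ω 0 := by rw [hω0]; positivity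
  have hanti : Antitone ω := by
    refine antitone_of_sub_succ_le_mul hα ?_ fun j => ?_
    · have hsum := hS (Nat.zero_le (1 - tbar))
      rw [hrec 0, hφω]
      simp only [range_zero, sum_empty] at hsum
      nlinarith [mul_nonneg hle0.le hsum, mul_nonneg (mul_nonneg hle0.le (sub_nonneg.2 hlam1.le)) hω0_nonneg]
    · have hsum := hS (show j + 1 - tbar ≤ j + 1 + 1 - tbar by omega)
      rw [hrec (j + 1), hrec j]
      nlinarith [mul_le_mul_of_nonneg_left hsum hle0.le]
  exact fun j _ => hanti (Nat.sub_le j 1)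
end

section
/- (Theorem 1, part II.) For all integers j, N with j ≥ N ≥ 3t̄+1, the sequence ω satisfies the bound ω(j) ≤ α^{j−N}·ω(N) + (j−N)·(1+β·t̄)·φ(0)·γ^{j−1−3t̄}, where γ = (1−λ_e)^{1/(2(t̄+1))}. -/
/-!
Since `α + β = 1 - λ_e = (γ ^ 2) ^ (t̄ + 1)`, each step of the delayed recurrence for `φ` loses a
factor `γ ^ 2`, so `φ l ≤ φ 0 * γ ^ (2 * l)`. Telescoping the recurrence turns the forcing term
`φ 0 - λ_e * ∑_{l < j + 1 - t̄} φ l` of `ω (j + 1)` into `φ M + β * ∑_{M - t̄ ≤ l < M} φ l` with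
`M = j + 1 - t̄`, whose `t̄ + 1` terms are each at most `φ 0 * γ ^ (j - 3 t̄)`. Unrolling
`ω (j + 1) ≤ α * ω j + (1 + β t̄) φ 0 * γ ^ (j - 3 t̄)` from `N` on, with `α ≤ γ`, gives the
bound.
-/

open Finset

structure IsDelayRecurrence_s9 (α β : ℝ) (t : ℕ) (φ : ℕ → ℝ) : Prop where
  succ_of_lt : ∀ j, j < t → φ (j + 1) = α * φ j
  succ_of_le : ∀ j, t ≤ j → φ (j + 1) = α * φ j + β * φ (j - t)

theorem sum_Ico_le_mul_pow {f : ℕ → ℝ} {C r : ℝ} (hC : 0 ≤ C) (hr0 : 0 ≤ r) (hr1 : r ≤ 1)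
    (hf : ∀ l, f l ≤ C * r ^ l) (a b : ℕ) :
    ∑ l ∈ Ico a b, f l ≤ (b - a : ℕ) * (C * r ^ a) := by
  have hbound : ∀ l ∈ Ico a b, f l ≤ C * r ^ a := fun l hl =>
    (hf l).trans (mul_le_mul_of_nonneg_left (pow_le_pow_of_le_one hr0 hr1 (mem_Ico.mp hl).1) hC)
  simpa only [Nat.card_Ico, nsmul_eq_mul] using sum_le_card_nsmul _ _ _ hbound

theorem le_pow_mul_add_nat_mul_pow {u : ℕ → ℝ} {a g C : ℝ} {K N : ℕ} (ha : 0 ≤ a)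
    (hag : a ≤ g) (hC : 0 ≤ C) (hKN : K < N)
    (hu : ∀ j, N ≤ j → u (j + 1) ≤ a * u j + C * g ^ (j - K)) (j : ℕ) (hj : N ≤ j) :
    u j ≤ a ^ (j - N) * u N + (j - N : ℕ) * C * g ^ (j - 1 - K) := by
  induction j, hj using Nat.le_induction with
  | base => simp
  | succ j hj ih =>
    have hag' : a * g ^ (j - 1 - K) ≤ g ^ (j - K) := by
      rw [show j - K = j - 1 - K + 1 by omega, pow_succ']
      exact mul_le_mul_of_nonneg_right hag (pow_nonneg (ha.trans hag) _)
    rw [show j + 1 - N = j - N + 1 by omega, show j + 1 - 1 - K = j - K by omega]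
    calc u (j + 1) ≤ a * u j + C * g ^ (j - K) := hu j hj
      _ ≤ a * (a ^ (j - N) * u N + (j - N : ℕ) * C * g ^ (j - 1 - K)) + C * g ^ (j - K) := by
        gcongr
      _ = a ^ (j - N + 1) * u N + (j - N : ℕ) * C * (a * g ^ (j - 1 - K))
          + C * g ^ (j - K) := by ring
      _ ≤ a ^ (j - N + 1) * u N + (j - N : ℕ) * C * g ^ (j - K) + C * g ^ (j - K) := by
        gcongr
      _ = a ^ (j - N + 1) * u N + (j - N + 1 : ℕ) * C * g ^ (j - K) := by push_cast; ring

namespace IsDelayRecurrence_s9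

variable {α β r : ℝ} {t : ℕ} {φ : ℕ → ℝ}

theorem le_mul_pow (h : IsDelayRecurrence_s9 α β t φ) (hα : 0 ≤ α) (hβ : 0 ≤ β)
    (hr0 : 0 ≤ r) (hr1 : r ≤ 1) (hαβ : α + β ≤ r ^ (t + 1)) (hφ : 0 ≤ φ 0) (n : ℕ) :
    φ n ≤ φ 0 * r ^ n := by
  induction n using Nat.strong_induction_on with
  | _ n ih =>
    match n with
    | 0 => simp
    | m + 1 =>
      rcases lt_or_ge m t with hm | hm
      · have hαr : α ≤ r :=
          calc α ≤ α + β := le_add_of_nonneg_right hβ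
            _ ≤ r ^ (t + 1) := hαβ
            _ ≤ r ^ 1 := pow_le_pow_of_le_one hr0 hr1 (by omega)
            _ = r := pow_one r
        calc φ (m + 1) = α * φ m := h.succ_of_lt m hm
          _ ≤ α * (φ 0 * r ^ m) := mul_le_mul_of_nonneg_left (ih m (by omega)) hα
          _ ≤ r * (φ 0 * r ^ m) := by gcongr
          _ = φ 0 * r ^ (m + 1) := by ring
      · have hpow : r ^ m ≤ r ^ (m - t) := pow_le_pow_of_le_one hr0 hr1 (by omega)
        have hsplit : r ^ (m + 1) = r ^ (t + 1) * r ^ (m - t) := by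
          rw [← pow_add]; congr 1; omega
        calc φ (m + 1) = α * φ m + β * φ (m - t) := h.succ_of_le m hm
          _ ≤ α * (φ 0 * r ^ m) + β * (φ 0 * r ^ (m - t)) := by
            gcongr
            exacts [ih m (by omega), ih (m - t) (by omega)]
          _ ≤ (α + β) * (φ 0 * r ^ (m - t)) := by
            rw [add_mul]; gcongr
          _ ≤ r ^ (t + 1) * (φ 0 * r ^ (m - t)) := by gcongr
          _ = φ 0 * r ^ (m + 1) := by rw [hsplit]; ring

theorem sub_mul_sum_range_eq (h : IsDelayRecurrence_s9 α β t φ) (M : ℕ) :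
    φ 0 - (1 - α - β) * ∑ l ∈ range M, φ l = φ M + β * ∑ l ∈ Ico (M - t) M, φ l := by
  induction M with
  | zero => simp
  | succ M ih =>
    rw [sum_range_succ]
    rcases lt_or_ge M t with hM | hM
    · rw [show M + 1 - t = M - t by omega, sum_Ico_succ_top (Nat.sub_le M t),
        h.succ_of_lt M hM]
      linear_combination ih
    · have hIco := (sum_Ico_succ_top (Nat.sub_le M t) φ).symm.trans
        (sum_eq_sum_Ico_succ_bot (Nat.lt_succ_of_le (Nat.sub_le M t)) φ)
      rw [show M + 1 - t = M - t + 1 by omega, h.succ_of_le M hM]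
      linear_combination ih + β * hIco

theorem sub_mul_sum_range_le (h : IsDelayRecurrence_s9 α β t φ) (hα : 0 ≤ α) (hβ : 0 ≤ β)
    (hr0 : 0 ≤ r) (hr1 : r ≤ 1) (hαβ : α + β ≤ r ^ (t + 1)) (hφ : 0 ≤ φ 0) (M : ℕ) :
    φ 0 - (1 - α - β) * ∑ l ∈ range M, φ l ≤ (1 + β * t) * φ 0 * r ^ (M - t) := by
  have hφr := h.le_mul_pow hα hβ hr0 hr1 hαβ hφ
  have hlast : φ M ≤ φ 0 * r ^ (M - t) :=
    (hφr M).trans (mul_le_mul_of_nonneg_left (pow_le_pow_of_le_one hr0 hr1 (Nat.sub_le M t)) hφ)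
  have hwindow : ∑ l ∈ Ico (M - t) M, φ l ≤ t * (φ 0 * r ^ (M - t)) :=
    (sum_Ico_le_mul_pow hφ hr0 hr1 hφr _ _).trans
      (by gcongr; exact_mod_cast (by omega : M - (M - t) ≤ t))
  rw [h.sub_mul_sum_range_eq]
  calc φ M + β * ∑ l ∈ Ico (M - t) M, φ l
      ≤ φ 0 * r ^ (M - t) + β * (t * (φ 0 * r ^ (M - t))) := by gcongr
    _ = (1 + β * t) * φ 0 * r ^ (M - t) := by ring

end IsDelayRecurrence_s9

theorem rpow_one_div_two_mul_succ_sq_pow {x : ℝ} (hx : 0 ≤ x) (t : ℕ) :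
    ((x ^ ((1 : ℝ) / (2 * ((t : ℝ) + 1)))) ^ 2) ^ (t + 1) = x := by
  rw [← pow_mul, one_div, show 2 * ((t : ℝ) + 1) = ((2 * (t + 1) : ℕ) : ℝ) by push_cast; ring]
  exact Real.rpow_inv_natCast_pow hx (by positivity)

theorem omega_exponential_bound_general
    (lam lam_e : ℝ) (hlam0 : 0 < lam) (hlam1 : lam < 1)
    (hle0 : 0 < lam_e) (hle1 : lam_e < 1)
    (tbar : ℕ)
    (φ : ℕ → ℝ)
    (hφ0 : φ 0 = lam * lam_e / (lam * (tbar : ℝ) + 1))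
    (hφ1 : ∀ j, j < tbar → φ (j + 1) = (1 - lam) * (1 - lam_e) * φ j)
    (hφ2 : ∀ j, tbar ≤ j → φ (j + 1) =
      (1 - lam) * (1 - lam_e) * φ j + lam * (1 - lam_e) * φ (j - tbar))
    (ω : ℕ → ℝ)
    (hω2 : ∀ j, tbar + 1 ≤ j →
      ω j = (1 - lam) * (1 - lam_e) * ω (j - 1) + φ 0
        - lam_e * ∑ l ∈ Finset.range (j - tbar), φ l) :
    ∀ N j : ℕ, 3 * tbar + 1 ≤ N → N ≤ j →
      ω j ≤ ((1 - lam) * (1 - lam_e)) ^ (j - N) * ω N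
        + ((j - N : ℕ) : ℝ) * (1 + lam * (1 - lam_e) * (tbar : ℝ)) * φ 0
          * ((1 - lam_e) ^ ((1 : ℝ) / (2 * ((tbar : ℝ) + 1)))) ^ (j - 1 - 3 * tbar) := by
  intro N j hN hNj
  set α := (1 - lam) * (1 - lam_e) with hα
  set β := lam * (1 - lam_e) with hβ
  set γ := (1 - lam_e) ^ ((1 : ℝ) / (2 * ((tbar : ℝ) + 1)))
  have hle : 0 ≤ 1 - lam_e := by linarith
  have hα0 : 0 ≤ α := mul_nonneg (by linarith) hle
  have hβ0 : 0 ≤ β := mul_nonneg hlam0.le hle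
  have hγ0 : 0 ≤ γ := Real.rpow_nonneg hle _
  have hγ1 : γ ≤ 1 := Real.rpow_le_one hle (by linarith) (by positivity)
  have hγpow : (γ ^ 2) ^ (tbar + 1) = α + β := by
    rw [rpow_one_div_two_mul_succ_sq_pow hle, hα, hβ]; ring
  have hαγ : α ≤ γ :=
    calc α ≤ α + β := le_add_of_nonneg_right hβ0
      _ = γ ^ (2 * (tbar + 1)) := by rw [pow_mul, hγpow]
      _ ≤ γ ^ 1 := pow_le_pow_of_le_one hγ0 hγ1 (by omega)
      _ = γ := pow_one γ
  have hφ : 0 ≤ φ 0 := by rw [hφ0]; positivity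
  have hrec : IsDelayRecurrence_s9 α β tbar φ := ⟨hφ1, hφ2⟩
  have hC : 0 ≤ (1 + β * tbar) * φ 0 :=
    mul_nonneg (add_nonneg zero_le_one (mul_nonneg hβ0 (Nat.cast_nonneg _))) hφ
  have hstep : ∀ i, N ≤ i → ω (i + 1) ≤ α * ω i + (1 + β * tbar) * φ 0 * γ ^ (i - 3 * tbar) := by
    intro i hi
    have hforcing := hrec.sub_mul_sum_range_le hα0 hβ0 (by positivity) (pow_le_one₀ hγ0 hγ1)
      hγpow.ge hφ (i + 1 - tbar)
    have hexp : (γ ^ 2) ^ (i + 1 - tbar - tbar) ≤ γ ^ (i - 3 * tbar) := by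
      rw [← pow_mul]; exact pow_le_pow_of_le_one hγ0 hγ1 (by omega)
    rw [hω2 (i + 1) (by omega), Nat.add_sub_cancel, show lam_e = 1 - α - β by rw [hα, hβ]; ring]
    linarith [mul_le_mul_of_nonneg_left hexp hC]
  exact (le_pow_mul_add_nat_mul_pow hα0 hαγ hC (by omega) hstep j hNj).trans_eq (by ring)

/-- Theorem 1, part II: exponential bound on `ω`. -/
theorem omega_exponential_bound
    (lam lam_e : ℝ) (hlam0 : 0 < lam) (hlam1 : lam < 1)
    (hle0 : 0 < lam_e) (hle1 : lam_e < 1)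
    (tbar : ℕ)
    (φ : ℕ → ℝ)
    (hφ0 : φ 0 = lam * lam_e / (lam * (tbar : ℝ) + 1))
    (hφ1 : ∀ j, j < tbar → φ (j + 1) = (1 - lam) * (1 - lam_e) * φ j)
    (hφ2 : ∀ j, tbar ≤ j → φ (j + 1) =
      (1 - lam) * (1 - lam_e) * φ j + lam * (1 - lam_e) * φ (j - tbar))
    (ω : ℕ → ℝ)
    (hω0 : ω 0 = lam_e / (lam * (tbar : ℝ) + 1))
    (hω1 : ∀ j, 1 ≤ j → j ≤ tbar →
      ω j = (1 - lam) * (1 - lam_e) * ω (j - 1) + φ 0)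
    (hω2 : ∀ j, tbar + 1 ≤ j →
      ω j = (1 - lam) * (1 - lam_e) * ω (j - 1) + φ 0
        - lam_e * ∑ l ∈ Finset.range (j - tbar), φ l) :
    ∀ N j : ℕ, 3 * tbar + 1 ≤ N → N ≤ j →
      ω j ≤ ((1 - lam) * (1 - lam_e)) ^ (j - N) * ω N
        + ((j - N : ℕ) : ℝ) * (1 + lam * (1 - lam_e) * (tbar : ℝ)) * φ 0
          * ((1 - lam_e) ^ ((1 : ℝ) / (2 * ((tbar : ℝ) + 1)))) ^ (j - 1 - 3 * tbar) :=
  omega_exponential_bound_general lam lam_e hlam0 hlam1 hle0 hle1 tbar φ hφ0 hφ1 hφ2 ω hω2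
end

section
/- (Theorem 1, part III.) For all natural numbers t̄₁ ≤ t̄₂ and every n ≥ 0, the cumulative distribution is monotonically nonincreasing in the threshold: Σ_{j=0}^{n} ω^{(t̄₁)}(j) ≥ Σ_{j=0}^{n} ω^{(t̄₂)}(j). -/
open Filter

noncomputable def cseq (a b : ℝ) (t : ℕ) : ℕ → ℝ
  | 0 => 1
  | (j+1) => a * cseq a b t j + (if t ≤ j then b * cseq a b t (j - t) else 0)
decreasing_by all_goals omega

lemma cseq_zero (a b : ℝ) (t : ℕ) : cseq a b t 0 = 1 := by rw [cseq]

lemma cseq_succ (a b : ℝ) (t : ℕ) (j : ℕ) :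
    cseq a b t (j+1) = a * cseq a b t j + (if t ≤ j then b * cseq a b t (j - t) else 0) := by
  rw [cseq]

noncomputable def DrS (a b : ℝ) (t m : ℕ) : ℝ := ∑ j ∈ Finset.range m, cseq a b t j

noncomputable def QS (a b e : ℝ) (t m : ℕ) : ℝ := 1 - e * DrS a b t m

noncomputable def LrS (a b : ℝ) (t m : ℕ) : ℝ :=
  ∑ j ∈ Finset.range m, cseq a b t j * (1 - a ^ (m - j))

noncomputable def PS (a b e : ℝ) (t m : ℕ) : ℝ := 1 - e * LrS a b t m


section facts
variable {a b e : ℝ} (ha : 0 ≤ a) (hb : 0 ≤ b)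

include ha hb in
lemma cseq_nonneg (t : ℕ) : ∀ j, 0 ≤ cseq a b t j := by
  intro j
  induction j using Nat.strong_induction_on with
  | _ j ih =>
    match j with
    | 0 => rw [cseq_zero]; norm_num
    | (k+1) =>
      rw [cseq_succ]
      have h1 := ih k (by omega)
      have h2 := ih (k - t) (by omega)
      have : 0 ≤ (if t ≤ k then b * cseq a b t (k - t) else 0) := by
        split
        · exact mul_nonneg hb h2
        · exact le_refl 0
      nlinarith [mul_nonneg ha h1]

lemma DrS_succ (t m : ℕ) :
    DrS a b t (m+1) = 1 + a * DrS a b t m + b * DrS a b t (m - t) := by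
  unfold DrS
  rw [Finset.sum_range_succ']
  simp only [cseq_succ, cseq_zero]
  rw [Finset.sum_add_distrib, Finset.mul_sum]
  have hite : ∑ j ∈ Finset.range m, (if t ≤ j then b * cseq a b t (j - t) else 0)
      = b * ∑ l ∈ Finset.range (m - t), cseq a b t l := by
    rw [← Finset.sum_filter, Finset.range_eq_Ico, Finset.Ico_filter_le, Finset.mul_sum]
    rw [max_eq_right (Nat.zero_le t), Finset.sum_Ico_eq_sum_range]
    exact Finset.sum_congr rfl (fun i _ => by rw [Nat.add_sub_cancel_left])
  rw [hite]; ring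

include ha hb in
lemma DrS_mono (t : ℕ) {m m' : ℕ} (h : m ≤ m') : DrS a b t m ≤ DrS a b t m' := by
  apply Finset.sum_le_sum_of_subset_of_nonneg (Finset.range_subset_range.2 h)
  exact fun j _ _ => cseq_nonneg ha hb t j

include ha hb in
lemma DrS_nonneg (t m : ℕ) : 0 ≤ DrS a b t m :=
  Finset.sum_nonneg fun j _ => cseq_nonneg ha hb t j

include ha hb in
lemma DrS_le (he : 0 < e) (habe : a + b + e = 1) (t : ℕ) : ∀ m, e * DrS a b t m ≤ 1 := by
  intro m
  induction m with
  | zero => simp [DrS]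
  | succ m ih =>
    rw [DrS_succ]
    have h2 : e * DrS a b t (m - t) ≤ 1 :=
      le_trans (by nlinarith [DrS_mono ha hb t (Nat.sub_le m t)]) ih
    nlinarith

include ha hb in
lemma DrS_anti_t {t1 t2 : ℕ} (h12 : t1 ≤ t2) : ∀ m, DrS a b t2 m ≤ DrS a b t1 m := by
  intro m
  induction m using Nat.strong_induction_on with
  | _ m ih =>
    match m with
    | 0 => simp [DrS]
    | (k+1) =>
      rw [DrS_succ, DrS_succ]
      have h1 := ih k (by omega)
      have h2 := ih (k - t2) (by omega)
      have h3 : DrS a b t1 (k - t2) ≤ DrS a b t1 (k - t1) :=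
        DrS_mono ha hb t1 (Nat.sub_le_sub_left h12 k)
      nlinarith

end facts

section qp
variable {a b e : ℝ} (ha : 0 ≤ a) (hb : 0 ≤ b) (he : 0 < e) (habe : a + b + e = 1)

lemma QS_zero (t : ℕ) : QS a b e t 0 = 1 := by simp [QS, DrS]

include habe in
lemma QS_succ (t m : ℕ) : QS a b e t (m+1) = a * QS a b e t m + b * QS a b e t (m - t) := by
  unfold QS; rw [DrS_succ]; ring_nf; linarith [congrArg (· * (1 : ℝ)) habe]

include ha hb he habe in
lemma QS_nonneg (t m : ℕ) : 0 ≤ QS a b e t m := by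
  have := DrS_le ha hb he habe t m; unfold QS; linarith

include ha hb he in
lemma QS_le_one (t m : ℕ) : QS a b e t m ≤ 1 := by
  have := DrS_nonneg ha hb t m; unfold QS; nlinarith

include ha hb he in
lemma QS_anti (t : ℕ) {m m' : ℕ} (h : m ≤ m') : QS a b e t m' ≤ QS a b e t m := by
  have := DrS_mono ha hb t h; unfold QS; nlinarith

include ha hb he in
lemma QS_mono_t {t1 t2 : ℕ} (h12 : t1 ≤ t2) (m : ℕ) : QS a b e t1 m ≤ QS a b e t2 m := by
  have := DrS_anti_t ha hb h12 m; unfold QS; nlinarith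

lemma LrS_succ (t m : ℕ) :
    LrS a b t (m+1) = a * LrS a b t m + (1 - a) * DrS a b t (m+1) := by
  unfold LrS DrS
  rw [Finset.sum_range_succ, Finset.sum_range_succ (f := fun j => cseq a b t j)]
  have h : ∑ j ∈ Finset.range m, cseq a b t j * (1 - a ^ (m + 1 - j))
      = ∑ j ∈ Finset.range m, (a * (cseq a b t j * (1 - a ^ (m - j))) + (1-a) * cseq a b t j) := by
    refine Finset.sum_congr rfl fun j hj => ?_
    have hj' : j < m := Finset.mem_range.1 hj
    have h2 : m + 1 - j = (m - j) + 1 := by omega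
    rw [h2, pow_succ]; ring
  rw [h, Finset.sum_add_distrib, ← Finset.mul_sum, ← Finset.mul_sum]
  have : m + 1 - m = 1 := by omega
  rw [this]; ring

lemma PS_zero (t : ℕ) : PS a b e t 0 = 1 := by simp [PS, LrS]

lemma PS_succ (t m : ℕ) :
    PS a b e t (m+1) = a * PS a b e t m + (1 - a) * QS a b e t (m+1) := by
  unfold PS QS; rw [LrS_succ]; ring

include ha hb he habe in
lemma PS_ge_QS (t m : ℕ) : QS a b e t m ≤ PS a b e t m := by
  induction m with
  | zero => rw [QS_zero, PS_zero]
  | succ m ih =>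
    rw [PS_succ]
    have h1 : QS a b e t (m+1) ≤ QS a b e t m := QS_anti ha hb he t (Nat.le_succ m)
    have ha1 : a < 1 := by linarith
    nlinarith

include ha hb he habe in
lemma PS_anti_succ (t m : ℕ) : PS a b e t (m+1) ≤ PS a b e t m := by
  rw [PS_succ]
  have h1 : QS a b e t (m+1) ≤ QS a b e t m := QS_anti ha hb he t (Nat.le_succ m)
  have h2 := PS_ge_QS ha hb he habe t m
  nlinarith

include ha hb he habe in
lemma PS_anti (t : ℕ) {m m' : ℕ} (h : m ≤ m') : PS a b e t m' ≤ PS a b e t m := by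
  induction m', h using Nat.le_induction with
  | base => exact le_rfl
  | succ k hk ih => exact le_trans (PS_anti_succ ha hb he habe t k) ih

include ha hb he habe in
lemma PS_nonneg (t m : ℕ) : 0 ≤ PS a b e t m :=
  le_trans (QS_nonneg ha hb he habe t m) (PS_ge_QS ha hb he habe t m)

include ha hb he habe in
lemma PS_le_one (t m : ℕ) : PS a b e t m ≤ 1 :=
  le_trans (PS_anti ha hb he habe t (Nat.zero_le m)) (le_of_eq (PS_zero t))

include ha hb he habe in
lemma PS_mono_t {t1 t2 : ℕ} (h12 : t1 ≤ t2) (m : ℕ) : PS a b e t1 m ≤ PS a b e t2 m := by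
  induction m with
  | zero => rw [PS_zero, PS_zero]
  | succ m ih =>
    rw [PS_succ, PS_succ]
    have := QS_mono_t ha hb he h12 (m+1)
    nlinarith

lemma PQ_diff (t m : ℕ) :
    PS a b e t m - QS a b e t (m+1) = e * ∑ j ∈ Finset.range (m+1), cseq a b t j * a ^ (m - j) := by
  unfold PS QS DrS LrS
  rw [Finset.sum_range_succ (f := fun j => cseq a b t j * a ^ (m - j))]
  have : m - m = 0 := by omega
  rw [this, pow_zero, Finset.sum_range_succ (f := fun j => cseq a b t j)]
  have hs : ∑ j ∈ Finset.range m, cseq a b t j - ∑ j ∈ Finset.range m, cseq a b t j * (1 - a ^ (m - j))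
      = ∑ j ∈ Finset.range m, cseq a b t j * a ^ (m - j) := by
    rw [← Finset.sum_sub_distrib]
    exact Finset.sum_congr rfl fun j _ => by ring
  linear_combination e * hs

include ha hb hb he habe in
lemma key_ineq (t m : ℕ) : e * a ^ m + b * PS a b e t m ≤ (1 - a) * QS a b e t m := by
  induction m with
  | zero => rw [PS_zero, QS_zero]; simp; linarith
  | succ m ih =>
    rw [PS_succ]
    have h1 : QS a b e t (m+1) ≤ QS a b e t (m - t) :=
      QS_anti ha hb he t (by omega)
    have hq := QS_succ habe (a := a) (b := b) (e := e) t m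
    have e1 := mul_le_mul_of_nonneg_left ih ha
    have hbb : (0:ℝ) ≤ b * (1 - a) := mul_nonneg hb (by linarith)
    have e2 := mul_le_mul_of_nonneg_left h1 hbb
    have e3 : (1-a) * QS a b e t (m+1) = (1-a) * (a * QS a b e t m + b * QS a b e t (m - t)) := by
      rw [hq]
    have e1' : e * a^(m+1) + a*b*PS a b e t m ≤ a*((1-a)*QS a b e t m) := by
      have hr : e*a^(m+1) + a*b*PS a b e t m = a*(e*a^m + b*PS a b e t m) := by ring
      rw [hr]; exact e1
    linarith [e1', e2, e3]
end qp

set_option maxHeartbeats 1000000 in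
/-- Theorem 1, part III: the cumulative distribution of `ω` is
monotonically nonincreasing in the threshold. `φ t` and `ω t` denote `φ^{(t)}`
and `ω^{(t)}`. -/
theorem omega_partial_sums_antitone_in_threshold
    (lam lam_e : ℝ) (hlam0 : 0 < lam) (hlam1 : lam < 1)
    (hle0 : 0 < lam_e) (hle1 : lam_e < 1)
    (φ : ℕ → ℕ → ℝ)
    (hφ0 : ∀ t : ℕ, φ t 0 = lam * lam_e / (lam * (t : ℝ) + 1))
    (hφ1 : ∀ t : ℕ, ∀ j, j < t → φ t (j + 1) = (1 - lam) * (1 - lam_e) * φ t j)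
    (hφ2 : ∀ t : ℕ, ∀ j, t ≤ j → φ t (j + 1) =
      (1 - lam) * (1 - lam_e) * φ t j + lam * (1 - lam_e) * φ t (j - t))
    (ω : ℕ → ℕ → ℝ)
    (hω0 : ∀ t : ℕ, ω t 0 = lam_e / (lam * (t : ℝ) + 1))
    (hω1 : ∀ t : ℕ, ∀ j, 1 ≤ j → j ≤ t →
      ω t j = (1 - lam) * (1 - lam_e) * ω t (j - 1) + φ t 0)
    (hω2 : ∀ t : ℕ, ∀ j, t + 1 ≤ j →
      ω t j = (1 - lam) * (1 - lam_e) * ω t (j - 1) + φ t 0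
        - lam_e * ∑ l ∈ Finset.range (j - t), φ t l)
    (t1 t2 : ℕ) (h12 : t1 ≤ t2) (n : ℕ) :
    ∑ j ∈ Finset.range (n + 1), ω t2 j ≤ ∑ j ∈ Finset.range (n + 1), ω t1 j := by
  set a : ℝ := (1 - lam) * (1 - lam_e) with ha_def
  set b : ℝ := lam * (1 - lam_e) with hb_def
  have ha0 : 0 ≤ a := by rw [ha_def]; nlinarith
  have hb0 : 0 ≤ b := by rw [hb_def]; nlinarith
  have habe : a + b + lam_e = 1 := by rw [ha_def, hb_def]; ring
  have h1a : (0:ℝ) < 1 - a := by nlinarith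
  have ha1 : a ≤ 1 := by nlinarith
  have hden : ∀ t : ℕ, (0:ℝ) < lam * (t : ℝ) + 1 := fun t => by positivity
  -- closed form for φ
  have φc : ∀ t j, φ t j = φ t 0 * cseq a b t j := by
    intro t j
    induction j using Nat.strong_induction_on with
    | _ j ih =>
      match j with
      | 0 => rw [cseq_zero]; ring
      | (k+1) =>
        rw [cseq_succ]
        rcases le_or_gt t k with h | h
        · rw [hφ2 t k h, ih k (by omega), ih (k - t) (by omega), if_pos h]; ring
        · rw [hφ1 t k h, ih k (by omega), if_neg (by omega)]; ring
  -- combined step for φ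
  have hstep : ∀ t j, φ t (j+1) = a * φ t j + (if t ≤ j then b * φ t (j - t) else 0) := by
    intro t j
    rcases le_or_gt t j with h | h
    · rw [hφ2 t j h, if_pos h]
    · rw [hφ1 t j h, if_neg (by omega)]; ring
  -- key identity
  have K : ∀ t m, φ t 0 = lam_e * (∑ j ∈ Finset.range (m+1), φ t j) + (1 - lam_e) * φ t m
      + b * ((∑ j ∈ Finset.range m, φ t j) - ∑ j ∈ Finset.range (m - t), φ t j) := by
    intro t m
    induction m with
    | zero => simp; ring
    | succ m ih =>
      have h1 := hstep t m
      have hs : (∑ j ∈ Finset.range (m+1), φ t j) = (∑ j ∈ Finset.range m, φ t j) + φ t m :=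
        Finset.sum_range_succ _ m
      rw [Finset.sum_range_succ (n := m+1)]
      rcases le_or_gt t m with h | h
      · have h2 : m + 1 - t = (m - t) + 1 := by omega
        rw [h2, Finset.sum_range_succ (n := (m-t))]
        rw [if_pos h] at h1
        linear_combination ih - h1 + (lam*lam_e - lam) * hs
      · have h2 : m + 1 - t = 0 := by omega
        have h3 : m - t = 0 := by omega
        rw [if_neg (by omega)] at h1
        rw [h2]
        rw [h3] at ih
        simp only [Finset.range_zero, Finset.sum_empty] at ih ⊢
        linear_combination ih - h1 + (lam*lam_e - lam) * hs
  -- closed form for ω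
  have W : ∀ t n, ω t n = ω t 0 * a ^ n + (∑ j ∈ Finset.Ico (n - t) n, φ t j)
      + (1 - lam_e) * ∑ j ∈ Finset.range (n - t), φ t j * a ^ (n - t - 1 - j) := by
    intro t n
    induction n with
    | zero => simp
    | succ n ih =>
      rcases lt_or_ge n t with h | h
      · -- n + 1 ≤ t case
        have e1 : n + 1 - t = 0 := by omega
        have e2 : n - t = 0 := by omega
        have hrec : ω t (n+1) = a * ω t n + φ t 0 := by
          have := hω1 t (n+1) (by omega) (by omega)
          simpa using this
        rw [hrec, ih, e1, e2]
        simp only [Finset.range_zero, Finset.sum_empty, Nat.zero_sub]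
        have hsum : ∑ j ∈ Finset.Ico 0 (n+1), φ t j
            = a * (∑ j ∈ Finset.Ico 0 n, φ t j) + φ t 0 := by
          simp only [← Finset.range_eq_Ico]
          rw [Finset.sum_range_succ' (fun j => φ t j) n, Finset.mul_sum]
          congr 1
          refine Finset.sum_congr rfl fun j hj => ?_
          have hj' : j < n := Finset.mem_range.1 hj
          rw [hφ1 t j (by omega)]
        rw [hsum]; ring
      · -- t ≤ n case
        set m := n - t with hm
        have hmn : m + t = n := by omega
        have e1 : n + 1 - t = m + 1 := by omega
        have hrec : ω t (n+1) = a * ω t n + φ t 0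
            - lam_e * ∑ l ∈ Finset.range (m+1), φ t l := by
          have := hω2 t (n+1) (by omega)
          rw [e1] at this
          simpa using this
        rw [hrec, ih, e1]
        -- third sum peel
        have h3 : ∑ j ∈ Finset.range (m+1), φ t j * a ^ (m + 1 - 1 - j)
            = φ t m + a * ∑ j ∈ Finset.range m, φ t j * a ^ (m - 1 - j) := by
          rw [Finset.sum_range_succ, Finset.mul_sum]
          have hmm : m + 1 - 1 - m = 0 := by omega
          rw [hmm, pow_zero, mul_one]
          rw [add_comm]
          congr 1
          refine Finset.sum_congr rfl fun j hj => ?_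
          have hj' : j < m := Finset.mem_range.1 hj
          have : m + 1 - 1 - j = (m - 1 - j) + 1 := by omega
          rw [this, pow_succ]; ring
        -- middle sum step
        have h4 : ∑ j ∈ Finset.Ico (m+1) (n+1), φ t j
            = a * (∑ j ∈ Finset.Ico m n, φ t j)
              + b * ((∑ j ∈ Finset.range m, φ t j) - ∑ j ∈ Finset.range (m - t), φ t j) := by
          rw [Finset.sum_Ico_eq_sum_range, Finset.sum_Ico_eq_sum_range]
          have hn1 : n + 1 - (m + 1) = t := by omega
          have hn2 : n - m = t := by omega
          rw [hn1, hn2, Finset.mul_sum]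
          have hper : ∀ i ∈ Finset.range t, φ t (m + 1 + i)
              = a * φ t (m + i) + (if t ≤ m + i then b * φ t (m + i - t) else 0) := by
            intro i _
            have : m + 1 + i = (m + i) + 1 := by omega
            rw [this, hstep t (m+i)]
          rw [Finset.sum_congr rfl hper, Finset.sum_add_distrib]
          congr 1
          -- the ite sum equals b * (Ψ m - Ψ (m-t))
          rw [← Finset.sum_filter]
          have hfil : {i ∈ Finset.range t | t ≤ m + i} = Finset.Ico (t - m) t := by
            ext i
            simp only [Finset.mem_filter, Finset.mem_range, Finset.mem_Ico]
            omega
          rw [hfil, Finset.sum_Ico_eq_sum_range]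
          have hΨ : (∑ j ∈ Finset.range m, φ t j) - ∑ j ∈ Finset.range (m - t), φ t j
              = ∑ j ∈ Finset.Ico (m - t) m, φ t j := by
            rw [Finset.sum_Ico_eq_sub _ (by omega)]
          rw [hΨ, Finset.sum_Ico_eq_sum_range, Finset.mul_sum]
          have hc : t - (t - m) = m - (m - t) := by omega
          rw [hc]
          refine Finset.sum_congr rfl fun i hi => ?_
          have hi' : i < m - (m - t) := Finset.mem_range.1 hi
          have harg : m + (t - m + i) - t = m - t + i := by omega
          rw [harg]
        rw [h3, h4]
        have hK := K t m
        have hpow : (a : ℝ) ^ (n+1) = a * a ^ n := by rw [pow_succ]; ring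
        rw [hpow]
        linear_combination hK
  -- G difference lemma
  have Gd : ∀ t n : ℕ, ∑ u ∈ Finset.range t, QS a b lam_e t ((n+1) - u)
      = (∑ u ∈ Finset.range t, QS a b lam_e t (n - u))
        - lam_e * ∑ j ∈ Finset.Ico (n + 1 - t) (n+1), cseq a b t j := by
    intro t n
    have per : ∀ u ∈ Finset.range t, QS a b lam_e t (n - u) - QS a b lam_e t ((n+1) - u)
        = if u ≤ n then lam_e * cseq a b t (n - u) else 0 := by
      intro u _
      by_cases h : u ≤ n
      · rw [if_pos h]
        have hh : (n+1) - u = (n - u) + 1 := by omega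
        rw [hh]
        unfold QS DrS
        rw [Finset.sum_range_succ]
        ring
      · rw [if_neg h]
        have h1 : n - u = 0 := by omega
        have h2 : (n+1) - u = 0 := by omega
        rw [h1, h2]
        ring
    have hsub : (∑ u ∈ Finset.range t, QS a b lam_e t (n - u))
        - (∑ u ∈ Finset.range t, QS a b lam_e t ((n+1) - u))
        = lam_e * ∑ j ∈ Finset.Ico (n + 1 - t) (n+1), cseq a b t j := by
      rw [← Finset.sum_sub_distrib, Finset.sum_congr rfl per, ← Finset.sum_filter]
      have hfil : {u ∈ Finset.range t | u ≤ n} = Finset.range (min t (n+1)) := by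
        ext u
        simp only [Finset.mem_filter, Finset.mem_range, Nat.lt_min]
        omega
      rw [hfil, Finset.sum_Ico_eq_sum_range, Finset.mul_sum]
      have hcard : (n+1) - (n + 1 - t) = min t (n+1) := by omega
      rw [hcard]
      rw [← Finset.sum_range_reflect]
      refine Finset.sum_congr rfl fun i hi => ?_
      have hi' : i < min t (n+1) := Finset.mem_range.1 hi
      have harg : n - (min t (n+1) - 1 - i) = n + 1 - t + i := by omega
      rw [harg]
    linarith [hsub]
  -- P difference lemma
  have Pd : ∀ t n : ℕ, PS a b lam_e t ((n+1) - t) = PS a b lam_e t (n - t)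
      - (1-a) * lam_e * ∑ j ∈ Finset.range (n + 1 - t), cseq a b t j * a ^ (n + 1 - t - 1 - j) := by
    intro t n
    rcases le_or_gt t n with h | h
    · have h1 : n + 1 - t = (n - t) + 1 := by omega
      rw [h1]
      set m := n - t with hm
      have hexp : ∑ j ∈ Finset.range (m+1), cseq a b t j * a ^ (m + 1 - 1 - j)
          = ∑ j ∈ Finset.range (m+1), cseq a b t j * a ^ (m - j) := by
        refine Finset.sum_congr rfl fun j hj => ?_
        have : m + 1 - 1 - j = m - j := by omega
        rw [this]
      rw [hexp, PS_succ]
      have hpq := PQ_diff (a := a) (b := b) (e := lam_e) t m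
      linear_combination (a - 1) * hpq
    · have h1 : n + 1 - t = 0 := by omega
      have h2 : n - t = 0 := by omega
      rw [h1, h2]
      simp
  -- master identity
  have M : ∀ t n : ℕ, ∑ j ∈ Finset.range (n+1), ω t j
      = 1 - (lam * (∑ u ∈ Finset.range t, QS a b lam_e t (n - u))
          + (lam_e * a ^ (n+1) + b * PS a b lam_e t (n - t)) / (1-a)) / (lam * (t:ℝ) + 1) := by
    intro t n
    induction n with
    | zero =>
      rw [Finset.sum_range_one, hω0]
      have hG : ∑ u ∈ Finset.range t, QS a b lam_e t (0 - u) = (t : ℝ) := by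
        have hper : ∀ u ∈ Finset.range t, QS a b lam_e t (0 - u) = (1:ℝ) := by
          intro u _
          have h0 : (0:ℕ) - u = 0 := by omega
          rw [h0, QS_zero]
        rw [Finset.sum_congr rfl hper, Finset.sum_const, Finset.card_range, nsmul_eq_mul, mul_one]
      have hP : PS a b lam_e t ((0:ℕ) - t) = 1 := by
        have : (0:ℕ) - t = 0 := by omega
        rw [this, PS_zero]
      rw [hG, hP]
      have hd := hden t
      have hb' : b = 1 - a - lam_e := by linarith [habe]
      rw [hb']
      field_simp
      ring
    | succ n ihn =>
      rw [Finset.sum_range_succ, ihn, W t (n+1)]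
      -- rewrite new G and new P
      rw [Gd t n, Pd t n]
      -- convert φ sums to cseq sums
      have hIco : ∑ j ∈ Finset.Ico (n + 1 - t) (n+1), φ t j
          = φ t 0 * ∑ j ∈ Finset.Ico (n + 1 - t) (n+1), cseq a b t j := by
        rw [Finset.mul_sum]
        exact Finset.sum_congr rfl fun j _ => φc t j
      have hM : ∑ j ∈ Finset.range (n + 1 - t), φ t j * a ^ (n + 1 - t - 1 - j)
          = φ t 0 * ∑ j ∈ Finset.range (n + 1 - t), cseq a b t j * a ^ (n + 1 - t - 1 - j) := by
        rw [Finset.mul_sum]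
        exact Finset.sum_congr rfl fun j _ => by rw [φc t j]; ring
      rw [hIco, hM, hω0, hφ0]
      have hd := hden t
      have h1a' : (1:ℝ) - a ≠ 0 := ne_of_gt h1a
      field_simp
      ring
  -- final assembly
  rw [M t1 n, M t2 n]
  apply sub_le_sub_left
  rw [div_le_div_iff₀ (hden t1) (hden t2)]
  set G1 : ℝ := ∑ u ∈ Finset.range t1, QS a b lam_e t1 (n - u) with hG1_def
  set G2 : ℝ := ∑ u ∈ Finset.range t2, QS a b lam_e t2 (n - u) with hG2_def
  set D : ℝ := ∑ u ∈ Finset.Ico t1 t2, QS a b lam_e t1 (n - u) with hD_def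
  set B1 : ℝ := (lam_e * a ^ (n+1) + b * PS a b lam_e t1 (n - t1)) / (1-a) with hB1_def
  set B2 : ℝ := (lam_e * a ^ (n+1) + b * PS a b lam_e t2 (n - t2)) / (1-a) with hB2_def
  have hQnn : ∀ t m : ℕ, 0 ≤ QS a b lam_e t m := fun t m => QS_nonneg ha0 hb0 hle0 habe t m
  have hG1nn : 0 ≤ G1 := Finset.sum_nonneg fun u _ => hQnn t1 _
  have hB1nn : 0 ≤ B1 := by
    apply div_nonneg _ h1a.le
    have := PS_nonneg ha0 hb0 hle0 habe t1 (n - t1)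
    have hp : (0:ℝ) ≤ a ^ (n+1) := pow_nonneg ha0 _
    nlinarith
  -- split G2 comparison
  have hG2 : G1 + D ≤ G2 := by
    rw [hG1_def, hD_def, hG2_def]
    simp only [Finset.range_eq_Ico]
    rw [Finset.sum_Ico_consecutive _ (Nat.zero_le t1) h12]
    exact Finset.sum_le_sum fun u _ => QS_mono_t ha0 hb0 hle0 h12 (n - u)
  -- B comparison
  have hB : B1 ≤ B2 := by
    have hPP : PS a b lam_e t1 (n - t1) ≤ PS a b lam_e t2 (n - t2) := by
      refine le_trans (PS_anti ha0 hb0 hle0 habe t1 (Nat.sub_le_sub_left h12 n)) ?_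
      exact PS_mono_t ha0 hb0 hle0 habe h12 (n - t2)
    rw [hB1_def, hB2_def, div_le_div_iff₀ h1a h1a]
    have hmm := mul_le_mul_of_nonneg_right (mul_le_mul_of_nonneg_left hPP hb0) h1a.le
    linarith
  -- key per-term bound on D terms
  have hkey : ∀ u ∈ Finset.Ico t1 t2, lam * G1 + B1 ≤ (lam * (t1:ℝ) + 1) * QS a b lam_e t1 (n - u) := by
    intro u hu
    obtain ⟨hu1, hu2⟩ := Finset.mem_Ico.1 hu
    have hQu : B1 ≤ QS a b lam_e t1 (n - u) := by
      rw [hB1_def, div_le_iff₀ h1a]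
      have hk := key_ineq ha0 hb0 hle0 habe t1 (n - u)
      have hp1 : a ^ (n+1) ≤ a ^ (n - u) := pow_le_pow_of_le_one ha0 ha1 (by omega)
      have hp2 : PS a b lam_e t1 (n - t1) ≤ PS a b lam_e t1 (n - u) :=
        PS_anti ha0 hb0 hle0 habe t1 (Nat.sub_le_sub_left hu1 n)
      nlinarith
    have hGu : G1 ≤ (t1:ℝ) * QS a b lam_e t1 (n - u) := by
      rw [hG1_def]
      have hbd : ∀ u' ∈ Finset.range t1, QS a b lam_e t1 (n - u')
          ≤ QS a b lam_e t1 (n - u) := by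
        intro u' hu'
        have : u' < t1 := Finset.mem_range.1 hu'
        exact QS_anti ha0 hb0 hle0 t1 (by omega)
      calc (∑ u' ∈ Finset.range t1, QS a b lam_e t1 (n - u'))
          ≤ ∑ u' ∈ Finset.range t1, QS a b lam_e t1 (n - u) := Finset.sum_le_sum hbd
        _ = (t1:ℝ) * QS a b lam_e t1 (n - u) := by
            rw [Finset.sum_const, Finset.card_range, nsmul_eq_mul]
    nlinarith
  -- sum over D
  have hD : ((t2:ℝ) - (t1:ℝ)) * (lam * G1 + B1) ≤ (lam * (t1:ℝ) + 1) * D := by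
    have hsum := Finset.sum_le_sum hkey
    rw [Finset.sum_const, Nat.card_Ico, nsmul_eq_mul, ← Finset.mul_sum] at hsum
    rw [Nat.cast_sub h12] at hsum
    exact hsum
  -- combine
  have hd1 := hden t1
  have hd2 := hden t2
  have s1 : lam * (G1 + D) + B1 ≤ lam * G2 + B2 := by
    have := mul_le_mul_of_nonneg_left hG2 hlam0.le
    linarith
  have s2 := mul_le_mul_of_nonneg_right s1 hd1.le
  have s3 := mul_le_mul_of_nonneg_left hD hlam0.le
  have hXnn : 0 ≤ lam * G1 := mul_nonneg hlam0.le hG1nn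
  linarith [s2, s3]
end

section
/- (Theorem 2, part I.) Suppose the series Σ_{j=0}^∞ ω(j)·c_j converges. Then for every natural number N, the truncation L(N, t̄) = Σ_{j=0}^{N} ω(j)·c_j + (1 − Σ_{j=0}^{N} ω(j))·c_{N+1} is a lower bound: L(N, t̄) ≤ Σ_{j=0}^∞ ω(j)·c_j. -/
open Matrix Filter Finset
open scoped MatrixOrder

/-! Since the weights `ω` are nonnegative with `∑ ω = 1` and `c` is nondecreasing (the iterates
of the monotone map `f` increase from `P̄`), the tail `∑_{j > N} ω j * c j` is at least
`c (N + 1) * ∑_{j > N} ω j = c (N + 1) * (1 - ∑_{j ≤ N} ω j)`.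

The substance is `∑ ω = 1`. The sequence `φ` is a nonnegative delayed linear recurrence with
`λ_e * ∑ φ = φ 0`, so `φ 0 - λ_e * ∑_{l < k} φ l = λ_e * T k` for the tails `T k = ∑_{l ≥ k} φ l`.
These satisfy `T (k + 1) = α * T k + β * T (k - t̄)` (truncated subtraction, `T 0 = ∑ φ`), hence
are summable with `λ_e * ∑ T = (1 + β * t̄) * ∑ φ`; and `ω (j + 1) = α * ω j + λ_e * T (j + 1 - t̄)`,
so summing gives `(1 - α) * ∑ ω = ω 0 + λ_e * ∑_j T (j + 1 - t̄)`, which evaluates to `1 - α`. -/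

lemma summable_of_sum_range_succ_le {g : ℕ → ℝ} (hg : ∀ j, 0 ≤ g j) {r K : ℝ} (hr0 : 0 ≤ r)
    (hr1 : r < 1) (h : ∀ J, ∑ j ∈ range (J + 1), g j ≤ K + r * ∑ j ∈ range J, g j) :
    Summable g := by
  have hK : 0 ≤ K := by simpa using (hg 0).trans (by simpa using h 0)
  have hr : 1 - r ≠ 0 := by linarith
  refine summable_of_sum_range_le hg (c := K / (1 - r)) fun J => ?_
  induction J with
  | zero => simp only [range_zero, sum_empty]; bound
  | succ J ih =>
    calc _ ≤ K + r * (K / (1 - r)) := (h J).trans (by gcongr)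
      _ = K / (1 - r) := by field_simp; ring

lemma sum_range_comp_tsub_of_le (x : ℕ → ℝ) {t J : ℕ} (hJ : J ≤ t) :
    ∑ k ∈ range J, x (k - t) = J * x 0 := by
  rw [sum_congr rfl fun k hk => by rw [Nat.sub_eq_zero_of_le (by simp at hk; omega)]]
  simp

lemma sum_range_comp_tsub_le {x : ℕ → ℝ} (hx : ∀ k, 0 ≤ x k) (t J : ℕ) :
    ∑ k ∈ range J, x (k - t) ≤ t * x 0 + ∑ k ∈ range J, x k := by
  rcases le_or_gt J t with hJ | hJ
  · rw [sum_range_comp_tsub_of_le x hJ]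
    have hJ' : (J : ℝ) ≤ t := by exact_mod_cast hJ
    nlinarith [sum_nonneg fun k (_ : k ∈ range J) => hx k, hx 0]
  · obtain ⟨m, rfl⟩ := Nat.exists_eq_add_of_le hJ.le
    rw [sum_range_add, sum_range_comp_tsub_of_le x le_rfl]
    simp only [add_tsub_cancel_left]
    gcongr
    · exact fun k _ _ => hx k
    · exact Nat.le_add_left m t

lemma HasSum.comp_tsub {x : ℕ → ℝ} {s : ℝ} (h : HasSum x s) (t : ℕ) :
    HasSum (fun k => x (k - t)) (t * x 0 + s) := by
  rw [← hasSum_nat_add_iff' t, sum_range_comp_tsub_of_le x le_rfl, add_sub_cancel_left]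
  simpa using h

section DelayedRecurrence

variable {a b : ℝ} {t : ℕ}

lemma nonneg_of_eq_delayed_add {x z : ℕ → ℝ} (ha : 0 ≤ a) (hb : 0 ≤ b) (hz : ∀ k, 0 ≤ z k)
    (h0 : 0 ≤ x 0) (hx : ∀ k, x (k + 1) = a * x k + b * x (k - t) + z k) (k : ℕ) : 0 ≤ x k := by
  induction k using Nat.strong_induction_on with
  | _ k ih =>
    cases k with
    | zero => exact h0
    | succ k =>
      rw [hx]
      have := ih k (by omega)
      have := ih (k - t) (by omega)
      have := hz k
      positivity

lemma hasSum_of_eq_delayed_add {x z : ℕ → ℝ} {ζ : ℝ} (ha : 0 ≤ a) (hb : 0 ≤ b) (hab : a + b < 1)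
    (hz : ∀ k, 0 ≤ z k) (hzζ : HasSum z ζ) (h0 : 0 ≤ x 0)
    (hx : ∀ k, x (k + 1) = a * x k + b * x (k - t) + z k) :
    HasSum x (((1 + b * t) * x 0 + ζ) / (1 - a - b)) := by
  have hx0 := nonneg_of_eq_delayed_add ha hb hz h0 hx
  have hsum : Summable x := by
    refine summable_of_sum_range_succ_le hx0 (add_nonneg ha hb) hab
      (K := (1 + b * t) * x 0 + ζ) fun J => ?_
    have hdelay := sum_range_comp_tsub_le hx0 t J
    have hzJ := sum_le_hasSum (range J) (fun k _ => hz k) hzζ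
    rw [sum_range_succ']
    simp only [hx, sum_add_distrib, ← mul_sum]
    nlinarith
  obtain ⟨s, hs⟩ := hsum
  have hshift : HasSum (fun k => x (k + 1)) (s - x 0) := by
    simpa using (hasSum_nat_add_iff' 1).mpr hs
  have hrec : HasSum (fun k => x (k + 1)) (a * s + b * (t * x 0 + s) + ζ) := by
    simp only [hx]
    exact ((hs.mul_left a).add ((hs.comp_tsub t).mul_left b)).add hzζ
  convert hs
  rw [div_eq_iff (by linarith)]
  linarith [hshift.unique hrec]

section Renewal

variable {φ : ℕ → ℝ} (h₁ : ∀ j, j < t → φ (j + 1) = a * φ j)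
  (h₂ : ∀ j, t ≤ j → φ (j + 1) = a * φ j + b * φ (j - t))
include h₁ h₂

lemma sum_range_succ_eq_of_renewal (J : ℕ) :
    ∑ j ∈ range (J + 1), φ j = φ 0 + a * ∑ j ∈ range J, φ j + b * ∑ j ∈ range (J - t), φ j := by
  induction J with
  | zero => simp
  | succ J ih =>
    conv_rhs => rw [sum_range_succ φ J]
    rw [sum_range_succ, ih]
    by_cases hJ : t ≤ J
    · rw [h₂ J hJ, show J + 1 - t = J - t + 1 by omega, sum_range_succ]
      ring
    · rw [h₁ J (by omega), show J + 1 - t = J - t by omega]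
      ring

lemma nonneg_of_renewal (ha : 0 ≤ a) (hb : 0 ≤ b) (h0 : 0 ≤ φ 0) (j : ℕ) : 0 ≤ φ j := by
  induction j using Nat.strong_induction_on with
  | _ j ih =>
    cases j with
    | zero => exact h0
    | succ j =>
      have := ih j (by omega)
      by_cases hj : t ≤ j
      · have := ih (j - t) (by omega)
        rw [h₂ j hj]
        positivity
      · rw [h₁ j (by omega)]
        positivity

lemma hasSum_of_renewal (ha : 0 ≤ a) (hb : 0 ≤ b) (hab : a + b < 1) (h0 : 0 ≤ φ 0) :
    HasSum φ (φ 0 / (1 - a - b)) := by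
  have hφ := nonneg_of_renewal h₁ h₂ ha hb h0
  have hmono (J : ℕ) : ∑ j ∈ range (J - t), φ j ≤ ∑ j ∈ range J, φ j :=
    sum_le_sum_of_subset_of_nonneg (range_subset_range.mpr (Nat.sub_le J t)) fun j _ _ => hφ j
  have hsum : Summable φ := by
    refine summable_of_sum_range_succ_le hφ (add_nonneg ha hb) hab (K := φ 0) fun J => ?_
    rw [sum_range_succ_eq_of_renewal h₁ h₂]
    nlinarith [hmono J]
  have hP := hsum.hasSum.tendsto_sum_nat
  have hlim : ∑' j, φ j = φ 0 + a * ∑' j, φ j + b * ∑' j, φ j := by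
    refine tendsto_nhds_unique ((tendsto_add_atTop_iff_nat 1).mpr hP) ?_
    simp only [sum_range_succ_eq_of_renewal h₁ h₂]
    exact (tendsto_const_nhds.add (hP.const_mul a)).add
      ((hP.comp (tendsto_sub_atTop_nat t)).const_mul b)
  convert hsum.hasSum
  rw [div_eq_iff (by linarith)]
  linarith

lemma hasSum_tail_of_renewal (ha : 0 ≤ a) (hb : 0 ≤ b) (hab : a + b < 1) (h0 : 0 ≤ φ 0) :
    HasSum (fun k => φ 0 / (1 - a - b) - ∑ j ∈ range k, φ j)
      ((1 + b * t) * (φ 0 / (1 - a - b)) / (1 - a - b)) := by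
  have hS := hasSum_of_renewal h₁ h₂ ha hb hab h0
  set S := φ 0 / (1 - a - b)
  have hφS : (1 - a - b) * S = φ 0 := mul_div_cancel₀ _ (by linarith)
  simpa using hasSum_of_eq_delayed_add (x := fun k => S - ∑ j ∈ range k, φ j) (t := t)
    ha hb hab (fun _ => le_rfl) hasSum_zero
    (by simpa using hS.nonneg (nonneg_of_renewal h₁ h₂ ha hb h0)) fun k => by
      rw [sum_range_succ_eq_of_renewal h₁ h₂]
      linear_combination hφS

lemma hasSum_of_eq_mul_add_renewal_tail (ha : 0 ≤ a) (hb : 0 ≤ b) (hab : a + b < 1)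
    (h0 : 0 ≤ φ 0) {ω : ℕ → ℝ} (hω0 : 0 ≤ ω 0)
    (hω : ∀ j, ω (j + 1) = a * ω j + φ 0 - (1 - a - b) * ∑ l ∈ range (j + 1 - t), φ l) :
    (∀ j, 0 ≤ ω j) ∧
      HasSum ω ((ω 0 + φ 0 * ((1 - a) * t + a + b) / (1 - a - b)) / (1 - a)) := by
  have hS := hasSum_of_renewal h₁ h₂ ha hb hab h0
  have hT := hasSum_tail_of_renewal h₁ h₂ ha hb hab h0
  set S := φ 0 / (1 - a - b) with hSdef
  set T := fun k => S - ∑ j ∈ range k, φ j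
  have hφS : (1 - a - b) * S = φ 0 := mul_div_cancel₀ _ (by linarith)
  have hT0 (k : ℕ) : 0 ≤ T k :=
    sub_nonneg.mpr (sum_le_hasSum _ (fun j _ => nonneg_of_renewal h₁ h₂ ha hb h0 j) hS)
  have hz : HasSum (fun k => (1 - a - b) * T (k + 1 - t))
      ((1 - a - b) * (t * S + (1 + b * t) * S / (1 - a - b) - S)) := by
    refine HasSum.mul_left _ ?_
    simpa [T] using (hasSum_nat_add_iff' 1).mpr (hT.comp_tsub t)
  have hω' (j : ℕ) : ω (j + 1) = a * ω j + 0 * ω (j - 0) + (1 - a - b) * T (j + 1 - t) := by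
    rw [hω]
    linear_combination -hφS
  have hz0 (k : ℕ) : 0 ≤ (1 - a - b) * T (k + 1 - t) := mul_nonneg (by linarith) (hT0 _)
  refine ⟨nonneg_of_eq_delayed_add ha le_rfl hz0 hω0 hω', ?_⟩
  convert hasSum_of_eq_delayed_add ha le_rfl (by linarith) hz0 hz hω0 hω' using 1
  have : 1 - a ≠ 0 := by linarith
  have : 1 - a - b ≠ 0 := by linarith
  rw [hSdef]
  field_simp
  ring

end Renewal

end DelayedRecurrence

lemma monotone_mul_mul_transpose_add {m : Type*} [Fintype m] (A Q : Matrix m m ℝ) :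
    Monotone fun X => A * X * Aᵀ + Q := by
  intro X Y h
  rw [le_iff, add_sub_add_right_eq_sub, ← Matrix.sub_mul, ← Matrix.mul_sub,
    ← conjTranspose_eq_transpose_of_trivial]
  exact (le_iff.mp h).mul_mul_conjTranspose_same A

lemma monotone_trace_iterate {m : Type*} [Fintype m] {A Q P : Matrix m m ℝ}
    (h : (A * P * Aᵀ + Q - P).PosSemidef) :
    Monotone fun j => ((fun X => A * X * Aᵀ + Q)^[j] P).trace := by
  refine fun i j hij => ?_
  have := (le_iff.mp <|
    (monotone_mul_mul_transpose_add A Q).monotone_iterate_of_le_map h hij).trace_nonneg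
  rwa [trace_sub, sub_nonneg] at this

lemma sum_add_tail_mul_le_tsum {ω c : ℕ → ℝ} (hω : ∀ j, 0 ≤ ω j) (hω1 : HasSum ω 1)
    (hc : Monotone c) (hωc : Summable fun j => ω j * c j) (N : ℕ) :
    ∑ j ∈ range N, ω j * c j + (1 - ∑ j ∈ range N, ω j) * c N ≤ ∑' j, ω j * c j := by
  have htail : HasSum (fun j => ω (j + N)) (1 - ∑ j ∈ range N, ω j) :=
    (hasSum_nat_add_iff' N).mpr hω1
  rw [← hωc.sum_add_tsum_nat_add N, ← htail.tsum_eq, ← tsum_mul_right]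
  refine add_le_add_right (Summable.tsum_le_tsum ?_ (htail.summable.mul_right _)
    ((summable_nat_add_iff N).mpr hωc)) _
  exact fun j => mul_le_mul_of_nonneg_left (hc (Nat.le_add_left N j)) (hω _)

lemma weights_nonneg_and_hasSum_one (lam lam_e : ℝ) (hlam0 : 0 < lam) (hlam1 : lam < 1)
    (hle0 : 0 < lam_e) (hle1 : lam_e < 1) (tbar : ℕ) (φ : ℕ → ℝ)
    (hφ0 : φ 0 = lam * lam_e / (lam * (tbar : ℝ) + 1))
    (hφ1 : ∀ j, j < tbar → φ (j + 1) = (1 - lam) * (1 - lam_e) * φ j)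
    (hφ2 : ∀ j, tbar ≤ j → φ (j + 1) =
      (1 - lam) * (1 - lam_e) * φ j + lam * (1 - lam_e) * φ (j - tbar))
    (ω : ℕ → ℝ) (hω0 : ω 0 = lam_e / (lam * (tbar : ℝ) + 1))
    (hω1 : ∀ j, 1 ≤ j → j ≤ tbar → ω j = (1 - lam) * (1 - lam_e) * ω (j - 1) + φ 0)
    (hω2 : ∀ j, tbar + 1 ≤ j → ω j = (1 - lam) * (1 - lam_e) * ω (j - 1) + φ 0
        - lam_e * ∑ l ∈ range (j - tbar), φ l) :
    (∀ j, 0 ≤ ω j) ∧ HasSum ω 1 := by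
  have ha : 0 ≤ (1 - lam) * (1 - lam_e) := mul_nonneg (by linarith) (by linarith)
  have hb : 0 ≤ lam * (1 - lam_e) := mul_nonneg hlam0.le (by linarith)
  have he : 1 - (1 - lam) * (1 - lam_e) - lam * (1 - lam_e) = lam_e := by ring
  have hω (j : ℕ) : ω (j + 1) = (1 - lam) * (1 - lam_e) * ω j + φ 0
      - (1 - (1 - lam) * (1 - lam_e) - lam * (1 - lam_e)) * ∑ l ∈ range (j + 1 - tbar), φ l := by
    rw [he]
    rcases le_or_gt (j + 1) tbar with hj | hj
    · simp [hω1 (j + 1) (by omega) hj, Nat.sub_eq_zero_of_le hj]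
    · simpa using hω2 (j + 1) hj
  obtain ⟨hnn, hsum⟩ := hasSum_of_eq_mul_add_renewal_tail hφ1 hφ2 ha hb (by linarith)
    (by rw [hφ0]; positivity) (by rw [hω0]; positivity) hω
  refine ⟨hnn, ?_⟩
  convert hsum using 1
  have : 1 - (1 - lam) * (1 - lam_e) ≠ 0 := by nlinarith
  rw [he, hω0, hφ0]
  field_simp
  ring

theorem truncation_lower_bound_general
    (lam lam_e : ℝ) (hlam0 : 0 < lam) (hlam1 : lam < 1)
    (hle0 : 0 < lam_e) (hle1 : lam_e < 1)
    (tbar : ℕ)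
    (φ : ℕ → ℝ)
    (hφ0 : φ 0 = lam * lam_e / (lam * (tbar : ℝ) + 1))
    (hφ1 : ∀ j, j < tbar → φ (j + 1) = (1 - lam) * (1 - lam_e) * φ j)
    (hφ2 : ∀ j, tbar ≤ j → φ (j + 1) =
      (1 - lam) * (1 - lam_e) * φ j + lam * (1 - lam_e) * φ (j - tbar))
    (ω : ℕ → ℝ)
    (hω0 : ω 0 = lam_e / (lam * (tbar : ℝ) + 1))
    (hω1 : ∀ j, 1 ≤ j → j ≤ tbar →
      ω j = (1 - lam) * (1 - lam_e) * ω (j - 1) + φ 0)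
    (hω2 : ∀ j, tbar + 1 ≤ j →
      ω j = (1 - lam) * (1 - lam_e) * ω (j - 1) + φ 0
        - lam_e * ∑ l ∈ Finset.range (j - tbar), φ l)
    (n : ℕ)
    (A Q Pbar : Matrix (Fin n) (Fin n) ℝ)
    (hloewner : (A * Pbar * Aᵀ + Q - Pbar).PosSemidef)
    (c : ℕ → ℝ) (hc : ∀ j, c j = ((fun X => A * X * Aᵀ + Q)^[j] Pbar).trace)
    (hsum : Summable fun j : ℕ => ω j * c j) :
    ∀ N : ℕ,
      (∑ j ∈ Finset.range (N + 1), ω j * c j)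
        + (1 - ∑ j ∈ Finset.range (N + 1), ω j) * c (N + 1)
      ≤ ∑' j : ℕ, ω j * c j := by
  obtain ⟨hω, hω_one⟩ := weights_nonneg_and_hasSum_one lam lam_e hlam0 hlam1 hle0 hle1 tbar φ
    hφ0 hφ1 hφ2 ω hω0 hω1 hω2
  have hc_mono : Monotone c := by
    simpa only [← hc] using monotone_trace_iterate hloewner
  exact fun N => sum_add_tail_mul_le_tsum hω hω_one hc_mono hsum (N + 1)

/-- Theorem 2, part I: the truncation `L(N, t̄)` is a lower bound
for the averaged expected error covariance. -/
theorem truncation_lower_bound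
    (lam lam_e : ℝ) (hlam0 : 0 < lam) (hlam1 : lam < 1)
    (hle0 : 0 < lam_e) (hle1 : lam_e < 1)
    (tbar : ℕ)
    (φ : ℕ → ℝ)
    (hφ0 : φ 0 = lam * lam_e / (lam * (tbar : ℝ) + 1))
    (hφ1 : ∀ j, j < tbar → φ (j + 1) = (1 - lam) * (1 - lam_e) * φ j)
    (hφ2 : ∀ j, tbar ≤ j → φ (j + 1) =
      (1 - lam) * (1 - lam_e) * φ j + lam * (1 - lam_e) * φ (j - tbar))
    (ω : ℕ → ℝ)
    (hω0 : ω 0 = lam_e / (lam * (tbar : ℝ) + 1))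
    (hω1 : ∀ j, 1 ≤ j → j ≤ tbar →
      ω j = (1 - lam) * (1 - lam_e) * ω (j - 1) + φ 0)
    (hω2 : ∀ j, tbar + 1 ≤ j →
      ω j = (1 - lam) * (1 - lam_e) * ω (j - 1) + φ 0
        - lam_e * ∑ l ∈ Finset.range (j - tbar), φ l)
    (n : ℕ) (hn : 0 < n)
    (A Q Pbar : Matrix (Fin n) (Fin n) ℝ)
    (hQ : Q.PosSemidef) (hP : Pbar.PosSemidef)
    (hloewner : (A * Pbar * Aᵀ + Q - Pbar).PosSemidef)
    (c : ℕ → ℝ) (hc : ∀ j, c j = ((fun X => A * X * Aᵀ + Q)^[j] Pbar).trace)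
    (hsum : Summable fun j : ℕ => ω j * c j) :
    ∀ N : ℕ,
      (∑ j ∈ Finset.range (N + 1), ω j * c j)
        + (1 - ∑ j ∈ Finset.range (N + 1), ω j) * c (N + 1)
      ≤ ∑' j : ℕ, ω j * c j :=
  truncation_lower_bound_general lam lam_e hlam0 hlam1 hle0 hle1 tbar φ hφ0 hφ1 hφ2 ω hω0 hω1 hω2 n
    A Q Pbar hloewner c hc hsum
end

section
/- (Theorem 2, part III.) For every natural number N and all natural numbers t̄₁ ≤ t̄₂, the truncation L(N, t̄) = Σ_{j=0}^{N} ω^{(t̄)}(j)·c_j + (1 − Σ_{j=0}^{N} ω^{(t̄)}(j))·c_{N+1} is monotonically nondecreasing in the threshold: L(N, t̄₁) ≤ L(N, t̄₂). -/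
open Matrix Filter

section Aux

variable (lam lam_e : ℝ)

/-- Normalized renewal sequence. -/
noncomputable def pseq (t : ℕ) : ℕ → ℝ
  | 0 => 1
  | (m+1) => (1-lam)*(1-lam_e) * pseq t m +
      (if t ≤ m then lam*(1-lam_e) * pseq t (m - t) else 0)

/-- Partial sums of `pseq`. -/
noncomputable def Pp (t m : ℕ) : ℝ := ∑ l ∈ Finset.range m, pseq lam lam_e t l

/-- Survival function. -/
noncomputable def useq (t m : ℕ) : ℝ := 1 - lam_e * Pp lam lam_e t m

/-- Tail quantity. -/
noncomputable def Tt (t K : ℕ) : ℝ :=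
  (useq lam lam_e t K + lam * ∑ i ∈ Finset.range t, useq lam lam_e t (K - (i+1)))
    / (lam * t + 1)

lemma pseq_zero (t : ℕ) : pseq lam lam_e t 0 = 1 := by rw [pseq]

lemma pseq_succ (t m : ℕ) : pseq lam lam_e t (m+1) =
    (1-lam)*(1-lam_e) * pseq lam lam_e t m +
      (if t ≤ m then lam*(1-lam_e) * pseq lam lam_e t (m - t) else 0) := by rw [pseq]

variable {lam lam_e}
variable (h0 : 0 < lam) (h1 : lam < 1) (h2 : 0 < lam_e) (h3 : lam_e < 1)

include h0 h1 h2 h3 in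
lemma pseq_nonneg (t m : ℕ) : 0 ≤ pseq lam lam_e t m := by
  induction m using Nat.strong_induction_on with
  | _ m ih =>
    match m with
    | 0 => norm_num [pseq_zero]
    | (m+1) =>
      rw [pseq_succ]
      have hα : (0:ℝ) ≤ (1-lam)*(1-lam_e) := by nlinarith
      have hβ : (0:ℝ) ≤ lam*(1-lam_e) := by nlinarith
      have hm := ih m (by omega)
      have hmt := ih (m - t) (by omega)
      by_cases ht : t ≤ m
      · rw [if_pos ht]; positivity
      · rw [if_neg ht]; positivity

lemma Pp_zero (t : ℕ) : Pp lam lam_e t 0 = 0 := by simp [Pp]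

lemma Pp_succ' (t m : ℕ) : Pp lam lam_e t (m+1) = Pp lam lam_e t m + pseq lam lam_e t m := by
  simp [Pp, Finset.sum_range_succ]

lemma Pp_succ (t m : ℕ) : Pp lam lam_e t (m+1) =
    1 + (1-lam)*(1-lam_e) * Pp lam lam_e t m + lam*(1-lam_e) * Pp lam lam_e t (m - t) := by
  induction m with
  | zero => simp [Pp_succ', Pp_zero, pseq_zero]
  | succ m ih =>
    conv_lhs => rw [Pp_succ', ih, pseq_succ]
    by_cases ht : t ≤ m
    · rw [if_pos ht]
      have h1' : m + 1 - t = (m - t) + 1 := by omega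
      rw [h1', Pp_succ', Pp_succ']
      ring
    · rw [if_neg ht]
      have h1' : m + 1 - t = 0 := by omega
      have h2' : m - t = 0 := by omega
      rw [h1', h2', Pp_succ']
      ring

lemma useq_zero (t : ℕ) : useq lam lam_e t 0 = 1 := by simp [useq, Pp_zero]

lemma useq_succ (t m : ℕ) : useq lam lam_e t (m+1) =
    (1-lam)*(1-lam_e) * useq lam lam_e t m + lam*(1-lam_e) * useq lam lam_e t (m - t) := by
  simp only [useq, Pp_succ]
  ring

include h0 h1 h2 h3 in
lemma useq_antitone (t : ℕ) {m m' : ℕ} (h : m ≤ m') :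
    useq lam lam_e t m' ≤ useq lam lam_e t m := by
  simp only [useq, sub_le_sub_iff_left]
  apply mul_le_mul_of_nonneg_left _ h2.le
  apply Finset.sum_le_sum_of_subset_of_nonneg (Finset.range_subset_range.2 h)
  intro i _ _
  exact pseq_nonneg h0 h1 h2 h3 t i

include h0 h1 h2 h3 in
lemma useq_mono_t {t1 t2 : ℕ} (ht : t1 ≤ t2) (m : ℕ) :
    useq lam lam_e t1 m ≤ useq lam lam_e t2 m := by
  induction m using Nat.strong_induction_on with
  | _ m ih =>
    match m with
    | 0 => rw [useq_zero, useq_zero]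
    | (m+1) =>
      rw [useq_succ, useq_succ]
      have hα : (0:ℝ) ≤ (1-lam)*(1-lam_e) := by nlinarith
      have hβ : (0:ℝ) ≤ lam*(1-lam_e) := by nlinarith
      have ha : useq lam lam_e t1 m ≤ useq lam lam_e t2 m := ih m (by omega)
      have hb : useq lam lam_e t1 (m - t1) ≤ useq lam lam_e t2 (m - t1) :=
        ih (m - t1) (by omega)
      have hc : useq lam lam_e t2 (m - t1) ≤ useq lam lam_e t2 (m - t2) :=
        useq_antitone h0 h1 h2 h3 t2 (by omega)
      have hd := hb.trans hc
      nlinarith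

end Aux

/-- Abel summation identity for the truncation. -/
lemma abel_trunc (w c : ℕ → ℝ) (N : ℕ) :
    (∑ j ∈ Finset.range (N+1), w j * c j) + (1 - ∑ j ∈ Finset.range (N+1), w j) * c (N+1)
      = c (N+1) - ∑ k ∈ Finset.range (N+1), (c (k+1) - c k) * ∑ j ∈ Finset.range (k+1), w j := by
  induction N with
  | zero => simp [Finset.sum_range_one]; ring
  | succ N ih =>
    rw [Finset.sum_range_succ (f := fun j => w j * c j),
      Finset.sum_range_succ
        (f := fun k => (c (k+1) - c k) * ∑ j ∈ Finset.range (k+1), w j),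
      Finset.sum_range_succ (f := w)]
    linear_combination ih

/-- Theorem 2, part III: the truncation `L(N, t̄)` is monotonically
nondecreasing in the threshold. -/
theorem truncation_monotone_in_threshold
    (lam lam_e : ℝ) (hlam0 : 0 < lam) (hlam1 : lam < 1)
    (hle0 : 0 < lam_e) (hle1 : lam_e < 1)
    (φ : ℕ → ℕ → ℝ)
    (hφ0 : ∀ t : ℕ, φ t 0 = lam * lam_e / (lam * (t : ℝ) + 1))
    (hφ1 : ∀ t : ℕ, ∀ j, j < t → φ t (j + 1) = (1 - lam) * (1 - lam_e) * φ t j)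
    (hφ2 : ∀ t : ℕ, ∀ j, t ≤ j → φ t (j + 1) =
      (1 - lam) * (1 - lam_e) * φ t j + lam * (1 - lam_e) * φ t (j - t))
    (ω : ℕ → ℕ → ℝ)
    (hω0 : ∀ t : ℕ, ω t 0 = lam_e / (lam * (t : ℝ) + 1))
    (hω1 : ∀ t : ℕ, ∀ j, 1 ≤ j → j ≤ t →
      ω t j = (1 - lam) * (1 - lam_e) * ω t (j - 1) + φ t 0)
    (hω2 : ∀ t : ℕ, ∀ j, t + 1 ≤ j →
      ω t j = (1 - lam) * (1 - lam_e) * ω t (j - 1) + φ t 0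
        - lam_e * ∑ l ∈ Finset.range (j - t), φ t l)
    (n : ℕ) (hn : 0 < n)
    (A Q Pbar : Matrix (Fin n) (Fin n) ℝ)
    (hQ : Q.PosSemidef) (hP : Pbar.PosSemidef)
    (hloewner : (A * Pbar * Aᵀ + Q - Pbar).PosSemidef)
    (c : ℕ → ℝ) (hc : ∀ j, c j = ((fun X => A * X * Aᵀ + Q)^[j] Pbar).trace)
    (N : ℕ) (t1 t2 : ℕ) (h12 : t1 ≤ t2) :
    (∑ j ∈ Finset.range (N + 1), ω t1 j * c j)
      + (1 - ∑ j ∈ Finset.range (N + 1), ω t1 j) * c (N + 1)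
    ≤ (∑ j ∈ Finset.range (N + 1), ω t2 j * c j)
      + (1 - ∑ j ∈ Finset.range (N + 1), ω t2 j) * c (N + 1) := by
  have hden : ∀ t : ℕ, (0:ℝ) < lam * t + 1 := fun t => by positivity
  have hdne : ∀ t : ℕ, (lam * (t:ℝ) + 1) ≠ 0 := fun t => (hden t).ne'
  -- φ closed form
  have hφp : ∀ t j, φ t j = lam * lam_e / (lam * t + 1) * pseq lam lam_e t j := by
    intro t j
    induction j using Nat.strong_induction_on with
    | _ j ih =>
      match j with
      | 0 => rw [hφ0, pseq_zero, mul_one]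
      | (j+1) =>
        by_cases ht : t ≤ j
        · rw [hφ2 t j ht, pseq_succ, if_pos ht, ih j (by omega), ih (j - t) (by omega)]
          ring
        · rw [hφ1 t j (by omega), pseq_succ, if_neg ht, ih j (by omega)]
          ring
  -- ω closed form
  have hωq : ∀ t k, ω t k = lam_e / (lam * t + 1) *
      (pseq lam lam_e t k + lam * (Pp lam lam_e t k - Pp lam lam_e t (k - t))) := by
    intro t k
    induction k with
    | zero =>
      rw [hω0, pseq_zero, Nat.zero_sub, Pp_zero]
      ring
    | succ k ih =>
      by_cases ht : t ≤ k
      · have hrec := hω2 t (k+1) (by omega)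
        simp only [Nat.add_sub_cancel] at hrec
        have hsum : ∑ l ∈ Finset.range (k + 1 - t), φ t l
            = lam * lam_e / (lam * t + 1) * Pp lam lam_e t (k + 1 - t) := by
          rw [Pp, Finset.mul_sum]
          exact Finset.sum_congr rfl fun l _ => hφp t l
        have h1' : k + 1 - t = (k - t) + 1 := by omega
        rw [hrec, ih, hφ0, hsum, h1', pseq_succ, if_pos ht, Pp_succ t k,
          Pp_succ' t (k - t)]
        field_simp
        ring
      · have hrec := hω1 t (k+1) (by omega) (by omega)
        simp only [Nat.add_sub_cancel] at hrec
        have h1' : k + 1 - t = 0 := by omega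
        have h2' : k - t = 0 := by omega
        rw [hrec, ih, hφ0, h1', pseq_succ, if_neg ht, Pp_succ t k, h2', Pp_zero]
        field_simp
        ring
  -- partial sums of ω
  have hS : ∀ t K, ∑ k ∈ Finset.range K, ω t k = 1 - Tt lam lam_e t K := by
    intro t K
    induction K with
    | zero =>
      simp only [Finset.range_zero, Finset.sum_empty, Tt, Nat.zero_sub, useq_zero,
        Finset.sum_const, Finset.card_range, nsmul_eq_mul, mul_one]
      field_simp
      ring
    | succ K ih =>
      rw [Finset.sum_range_succ, ih, hωq]
      have hTsucc : Tt lam lam_e t (K + 1)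
          = (useq lam lam_e t (K+1) + lam * ∑ i ∈ Finset.range t, useq lam lam_e t (K - i))
            / (lam * t + 1) := by
        rw [Tt]
        have hcongr : (∑ i ∈ Finset.range t, useq lam lam_e t (K + 1 - (i+1)))
            = ∑ i ∈ Finset.range t, useq lam lam_e t (K - i) :=
          Finset.sum_congr rfl fun i _ => by congr 1; omega
        rw [hcongr]
      have tele : (∑ i ∈ Finset.range t, useq lam lam_e t (K - (i+1)))
          - (∑ i ∈ Finset.range t, useq lam lam_e t (K - i))
          = useq lam lam_e t (K - t) - useq lam lam_e t K := by
        rw [← Finset.sum_sub_distrib]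
        simpa using Finset.sum_range_sub (fun i => useq lam lam_e t (K - i)) t
      have hu1 : useq lam lam_e t (K+1) = useq lam lam_e t K - lam_e * pseq lam lam_e t K := by
        rw [useq, useq, Pp_succ']
        ring
      have hu2 : useq lam lam_e t (K - t) - useq lam lam_e t K
          = lam_e * (Pp lam lam_e t K - Pp lam lam_e t (K - t)) := by
        rw [useq, useq]
        ring
      have hnum : useq lam lam_e t K - lam_e * pseq lam lam_e t K
            + lam * ∑ i ∈ Finset.range t, useq lam lam_e t (K - i)
          = (useq lam lam_e t K + lam * ∑ i ∈ Finset.range t, useq lam lam_e t (K - (i+1)))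
            - lam_e * (pseq lam lam_e t K
                + lam * (Pp lam lam_e t K - Pp lam lam_e t (K - t))) := by
        nlinarith [tele, hu2]
      rw [hTsucc, hu1, hnum, Tt]
      field_simp
      ring
  -- monotonicity of Tt in the threshold
  have hT : ∀ K, Tt lam lam_e t1 K ≤ Tt lam lam_e t2 K := by
    intro K
    have step1 : (useq lam lam_e t1 K
          + lam * ∑ i ∈ Finset.range t2, useq lam lam_e t1 (K - (i+1))) / (lam * t2 + 1)
        ≤ Tt lam lam_e t2 K := by
      rw [Tt]
      refine (div_le_div_iff_of_pos_right (hden t2)).mpr ?_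
      have h1 := useq_mono_t hlam0 hlam1 hle0 hle1 h12 K
      have h2 : ∀ i ∈ Finset.range t2, useq lam lam_e t1 (K - (i+1))
          ≤ useq lam lam_e t2 (K - (i+1)) :=
        fun i _ => useq_mono_t hlam0 hlam1 hle0 hle1 h12 (K - (i+1))
      have h3 := Finset.sum_le_sum h2
      nlinarith
    refine le_trans ?_ step1
    have gmono : ∀ t : ℕ, t1 ≤ t → Tt lam lam_e t1 K
        ≤ (useq lam lam_e t1 K
            + lam * ∑ i ∈ Finset.range t, useq lam lam_e t1 (K - (i+1))) / (lam * t + 1) := by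
      intro t ht
      induction t, ht using Nat.le_induction with
      | base => rw [Tt]
      | succ t ht ih =>
        refine le_trans ih ?_
        rw [div_le_div_iff₀ (hden t) (hden (t+1))]
        have hK : useq lam lam_e t1 K ≤ useq lam lam_e t1 (K - (t+1)) :=
          useq_antitone hlam0 hlam1 hle0 hle1 t1 (Nat.sub_le K (t+1))
        have hterm : ∀ i ∈ Finset.range t, useq lam lam_e t1 (K - (i+1))
            ≤ useq lam lam_e t1 (K - (t+1)) := by
          intro i hi
          refine useq_antitone hlam0 hlam1 hle0 hle1 t1 ?_
          simp only [Finset.mem_range] at hi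
          omega
        have hsum : (∑ i ∈ Finset.range t, useq lam lam_e t1 (K - (i+1)))
            ≤ (t : ℝ) * useq lam lam_e t1 (K - (t+1)) := by
          have := Finset.sum_le_card_nsmul (Finset.range t)
            (fun i => useq lam lam_e t1 (K - (i+1))) (useq lam lam_e t1 (K - (t+1))) hterm
          simpa [Finset.card_range, nsmul_eq_mul] using this
        rw [Finset.sum_range_succ]
        push_cast
        have htnn : (0:ℝ) ≤ (t:ℝ) := Nat.cast_nonneg t
        have e1 : lam * useq lam lam_e t1 K ≤ lam * useq lam lam_e t1 (K - (t+1)) :=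
          mul_le_mul_of_nonneg_left hK hlam0.le
        have e2 : (lam * lam) * (∑ i ∈ Finset.range t, useq lam lam_e t1 (K - (i+1)))
            ≤ (lam * lam) * ((t : ℝ) * useq lam lam_e t1 (K - (t+1))) :=
          mul_le_mul_of_nonneg_left hsum (by positivity)
        nlinarith [e1, e2]
    exact gmono t2 h12
  -- monotonicity of c
  have hpsd : ∀ k, (((fun X => A * X * Aᵀ + Q)^[k+1] Pbar)
      - ((fun X => A * X * Aᵀ + Q)^[k] Pbar)).PosSemidef := by
    intro k
    induction k with
    | zero => simpa using hloewner
    | succ k ih =>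
      have hrw : ((fun X => A * X * Aᵀ + Q)^[k+2] Pbar)
          - ((fun X => A * X * Aᵀ + Q)^[k+1] Pbar)
          = A * (((fun X => A * X * Aᵀ + Q)^[k+1] Pbar)
              - ((fun X => A * X * Aᵀ + Q)^[k] Pbar)) * Aᵀ := by
        rw [Function.iterate_succ_apply' (fun X => A * X * Aᵀ + Q) (k+1),
          Function.iterate_succ_apply' (fun X => A * X * Aᵀ + Q) k]
        simp only [mul_sub, sub_mul]
        abel
      rw [hrw]
      have := ih.mul_mul_conjTranspose_same A
      simpa using this
  have hcmono : ∀ k, c k ≤ c (k+1) := by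
    intro k
    rw [hc, hc]
    have h := hpsd k
    have htr : 0 ≤ (((fun X => A * X * Aᵀ + Q)^[k+1] Pbar)
        - ((fun X => A * X * Aᵀ + Q)^[k] Pbar)).trace := by
      rw [Matrix.trace]
      refine Finset.sum_nonneg fun i _ => ?_
      exact h.diag_nonneg
    rw [Matrix.trace_sub] at htr
    linarith
  -- assemble via Abel summation
  rw [abel_trunc, abel_trunc]
  apply sub_le_sub_left
  refine Finset.sum_le_sum fun k _ => ?_
  have hcd : 0 ≤ c (k+1) - c k := sub_nonneg.2 (hcmono k)
  refine mul_le_mul_of_nonneg_left ?_ hcd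
  rw [hS, hS]
  have := hT (k+1)
  linarith
end
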